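/- arXiv:1805.01254 — 10 statements merged into one kernel-verified Lean document; each statement's English description precedes it below -/
import Mathlib

section
/- A sequence of polynomials {a_n(q)}_{n≥1} ⊆ ℤ[q] satisfies the q-Gauss congruences if and only if for all positive integers n and i one has a_n(ω_n^i) = a_{gcd(n,i)}(1), which in turn holds if and only if for all n ≥ 1 and every divisor d of n one has a_n(q) ≡ a_{n/d}(1) mod Φ_d(q), where Φ_d is the d-th cyclotomic polynomial. -/
open Polynomial Finset

/-- The `q`-analogue `[n]_q = (q^n - 1)/(q - 1) = 1 + q + ⋯ + q^{n-1}` in `ℤ[q]`. -/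
noncomputable def qInt (n : ℕ) : Polynomial ℤ := ∑ i ∈ Finset.range n, X ^ i

/-- A sequence `{a_n(q)}_{n ≥ 1} ⊆ ℤ[q]` satisfies the `q`-Gauss congruences if for all `n ≥ 1`,
`∑_{d ∣ n} μ(d) a_{n/d}(q^d) ≡ 0 mod [n]_q`. -/
def qGauss (a : ℕ → Polynomial ℤ) : Prop :=
  ∀ n : ℕ, 0 < n →
    qInt n ∣ ∑ d ∈ n.divisors,
      Polynomial.C (ArithmeticFunction.moebius d) * ((a (n / d)).comp (X ^ d))

/-!
Everything is decided at roots of unity. Since `[n]_q = ∏_{1 < d ∣ n} Φ_d` and distinct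
cyclotomic polynomials are coprime over `ℚ`, divisibility by `[n]_q` (resp. by `Φ_d`) amounts to
vanishing at every nontrivial `n`-th root of unity (resp. at one primitive `d`-th root).
At `q = ω_n^k` with `n ∤ k`, the Möbius sum of the `q`-Gauss congruence is the Möbius transform,
in `n`, of the defect `a_n(ω_n^k) - a_{gcd(n,k)}(1)`, because `∑_{d ∣ n} μ(d) f(gcd(n/d, k)) = 0`
for every `f`. By Möbius inversion these transforms all vanish iff all defects do.
-/

open scoped ArithmeticFunction.Moebius

namespace ArithmeticFunction

variable {M : Type*} [AddCommGroup M]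

theorem forall_sum_moebius_smul_eq_zero_iff {f : ℕ → M} :
    (∀ n > 0, ∑ d ∈ n.divisors, μ d • f (n / d) = 0) ↔ ∀ n > 0, f n = 0 := by
  have h := sum_eq_iff_sum_smul_moebius_eq (f := fun _ => (0 : M)) (g := f)
  simp only [sum_const_zero, Nat.sum_divisorsAntidiagonal (fun d m => μ d • f m)] at h
  simpa only [eq_comm] using h.symm

theorem sum_moebius_smul_gcd_eq_zero (f : ℕ → M) {n k : ℕ} (hn : 0 < n) (hk : ¬ n ∣ k) :
    ∑ d ∈ n.divisors, μ d • f ((n / d).gcd k) = 0 := by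
  obtain ⟨g, hg⟩ : ∃ g : ℕ → M, ∀ m > 0, ∑ c ∈ m.divisors, g c = f m :=
    ⟨_, sum_eq_iff_sum_smul_moebius_eq.mpr fun _ _ => rfl⟩
  have hgcd : ∀ m > 0, ∑ c ∈ m.divisors, (if c ∣ k then g c else 0) = f (m.gcd k) := by
    intro m hm
    rw [← sum_filter, ← hg _ (Nat.gcd_pos_of_pos_left k hm),
      ← Nat.divisors_filter_dvd_of_dvd hm.ne' (Nat.gcd_dvd_left m k)]
    refine sum_congr (filter_congr fun c hc => ?_) fun _ _ => rfl
    rw [Nat.dvd_gcd_iff, and_iff_right (Nat.dvd_of_mem_divisors hc)]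
  -- Möbius inversion of `hgcd` at `n` picks out the term `if n ∣ k then g n else 0`
  have h := sum_eq_iff_sum_smul_moebius_eq.mp hgcd n hn
  rwa [Nat.sum_divisorsAntidiagonal (fun d m => μ d • f (m.gcd k)), if_neg hk] at h

end ArithmeticFunction

open ArithmeticFunction

theorem IsPrimitiveRoot.pow_div_gcd {M : Type*} [CommMonoid M] {ζ : M} {n : ℕ}
    (h : IsPrimitiveRoot ζ n) (hn : 0 < n) (i : ℕ) : IsPrimitiveRoot (ζ ^ i) (n / n.gcd i) := by
  rcases Nat.eq_zero_or_pos i with rfl | hi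
  · simp [Nat.div_self hn]
  · rw [h.eq_orderOf, ← orderOf_pow' ζ hi.ne']
    exact IsPrimitiveRoot.orderOf _

theorem Polynomial.cyclotomic_dvd_iff_aeval_eq_zero {K : Type*} [Field K] [CharZero K] {ζ : K}
    {d : ℕ} (hζ : IsPrimitiveRoot ζ d) (hd : 0 < d) {p : ℤ[X]} :
    cyclotomic d ℤ ∣ p ↔ aeval ζ p = 0 := by
  rw [cyclotomic_eq_minpoly hζ hd, minpoly.isIntegrallyClosed_dvd_iff (hζ.isIntegral hd)]

theorem Polynomial.prod_cyclotomic_dvd_iff {s : Finset ℕ} {p : ℤ[X]} :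
    ∏ d ∈ s, cyclotomic d ℤ ∣ p ↔ ∀ d ∈ s, cyclotomic d ℤ ∣ p := by
  refine ⟨fun h d hd => (dvd_prod_of_mem (cyclotomic · ℤ) hd).trans h, fun h => ?_⟩
  have hmonic : (∏ d ∈ s, cyclotomic d ℤ).Monic :=
    monic_prod_of_monic _ _ fun d _ => cyclotomic.monic d ℤ
  rw [← map_dvd_map (Int.castRingHom ℚ) Int.cast_injective hmonic, Polynomial.map_prod]
  simp_rw [map_cyclotomic_int]
  refine prod_dvd_of_coprime (fun d _ e _ hde => cyclotomic.isCoprime_rat hde) fun d hd => ?_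
  simpa only [map_cyclotomic_int] using Polynomial.map_dvd (Int.castRingHom ℚ) (h d hd)

theorem Polynomial.aeval_one_eq_intCast {A : Type*} [Ring A] (p : ℤ[X]) :
    aeval (1 : A) p = ((p.eval 1 : ℤ) : A) := by
  simpa using aeval_algebraMap_apply A (1 : ℤ) p

noncomputable def ω (n : ℕ) : ℂ := Complex.exp (2 * (Real.pi : ℂ) * Complex.I / (n : ℂ))

theorem isPrimitiveRoot_ω {n : ℕ} (hn : 0 < n) : IsPrimitiveRoot (ω n) n :=
  Complex.isPrimitiveRoot_exp n hn.ne'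

theorem ω_pow_of_dvd {n d : ℕ} (hn : 0 < n) (hd : d ∣ n) : ω n ^ d = ω (n / d) := by
  obtain ⟨m, rfl⟩ := hd
  have hd0 : (d : ℂ) ≠ 0 := by exact_mod_cast (Nat.pos_of_mul_pos_right hn).ne'
  have hm0 : (m : ℂ) ≠ 0 := by exact_mod_cast (Nat.pos_of_mul_pos_left hn).ne'
  rw [Nat.mul_div_cancel_left _ (Nat.pos_of_mul_pos_right hn), ω, ω, ← Complex.exp_nat_mul]
  congr 1
  push_cast
  field_simp

theorem qInt_dvd_iff {n : ℕ} (hn : 0 < n) {p : ℤ[X]} :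
    qInt n ∣ p ↔ ∀ k, ¬ n ∣ k → aeval (ω n ^ k) p = 0 := by
  have hpos : ∀ k, 0 < n / n.gcd k := fun k =>
    Nat.div_pos (Nat.gcd_le_left k hn) (Nat.gcd_pos_of_pos_left k hn)
  rw [qInt, ← prod_cyclotomic_eq_geom_sum hn, prod_cyclotomic_dvd_iff]
  constructor
  · intro h k hk
    have hd : n / n.gcd k ∈ n.divisors.erase 1 := by
      refine mem_erase.mpr ⟨fun h1 => hk ?_, Nat.mem_divisors.mpr
        ⟨Nat.div_dvd_of_dvd (Nat.gcd_dvd_left n k), hn.ne'⟩⟩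
      rw [← Nat.eq_of_dvd_of_div_eq_one (Nat.gcd_dvd_left n k) h1]
      exact Nat.gcd_dvd_right n k
    exact (cyclotomic_dvd_iff_aeval_eq_zero ((isPrimitiveRoot_ω hn).pow_div_gcd hn k)
      (hpos k)).mp (h _ hd)
  · intro h d hd
    simp only [mem_erase, Nat.mem_divisors] at hd
    obtain ⟨hd1, hdn, -⟩ := hd
    have hζ := (isPrimitiveRoot_ω hn).pow_div_gcd hn (n / d)
    rw [Nat.gcd_eq_right (Nat.div_dvd_of_dvd hdn), Nat.div_div_self hdn hn.ne'] at hζ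
    have hd0 : 0 < d := Nat.pos_of_dvd_of_pos hdn hn
    refine (cyclotomic_dvd_iff_aeval_eq_zero hζ hd0).mpr (h _ fun hnd => ?_)
    have hlt : n / d < n := Nat.div_lt_self hn (lt_of_le_of_ne hd0 (Ne.symm hd1))
    exact hlt.not_ge (Nat.le_of_dvd (Nat.div_pos (Nat.le_of_dvd hn hdn) hd0) hnd)

noncomputable def qGaussSum (a : ℕ → ℤ[X]) (n : ℕ) : ℤ[X] :=
  ∑ d ∈ n.divisors, C (μ d) * (a (n / d)).comp (X ^ d)

theorem aeval_ω_pow_qGaussSum (a : ℕ → ℤ[X]) {n : ℕ} (hn : 0 < n) (k : ℕ) :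
    aeval (ω n ^ k) (qGaussSum a n)
      = ∑ d ∈ n.divisors, μ d • aeval (ω (n / d) ^ k) (a (n / d)) := by
  simp only [qGaussSum, map_sum, map_mul, aeval_comp, aeval_X_pow, eq_intCast, map_intCast,
    zsmul_eq_mul]
  refine sum_congr rfl fun d hd => ?_
  rw [← pow_mul, mul_comm k, pow_mul, ω_pow_of_dvd hn (Nat.dvd_of_mem_divisors hd), mul_comm]

noncomputable def rootDefect (a : ℕ → ℤ[X]) (k m : ℕ) : ℂ :=
  aeval (ω m ^ k) (a m) - aeval (1 : ℂ) (a (m.gcd k))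

theorem rootDefect_eq_zero_of_dvd (a : ℕ → ℤ[X]) {k m : ℕ} (hm : 0 < m) (h : m ∣ k) :
    rootDefect a k m = 0 := by
  obtain ⟨c, rfl⟩ := h
  rw [rootDefect, pow_mul, (isPrimitiveRoot_ω hm).pow_eq_one, one_pow,
    Nat.gcd_eq_left (dvd_mul_right m c), sub_self]

theorem aeval_ω_pow_qGaussSum_of_not_dvd (a : ℕ → ℤ[X]) {n k : ℕ} (hn : 0 < n)
    (hk : ¬ n ∣ k) :
    aeval (ω n ^ k) (qGaussSum a n)
      = ∑ d ∈ n.divisors, μ d • rootDefect a k (n / d) := by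
  simp only [aeval_ω_pow_qGaussSum a hn, rootDefect, smul_sub, sum_sub_distrib,
    sum_moebius_smul_gcd_eq_zero (fun m => aeval (1 : ℂ) (a m)) hn hk, sub_zero]

def qGaussRoots (a : ℕ → ℤ[X]) : Prop :=
  ∀ n i : ℕ, 0 < n → 0 < i → aeval (ω n ^ i) (a n) = aeval (1 : ℂ) (a (n.gcd i))

def qGaussCyclotomic (a : ℕ → ℤ[X]) : Prop :=
  ∀ n : ℕ, 0 < n → ∀ d : ℕ, d ∣ n → cyclotomic d ℤ ∣ a n - C ((a (n / d)).eval 1)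

theorem forall_aeval_ω_pow_qGaussSum_eq_zero_iff (a : ℕ → ℤ[X]) (k : ℕ) :
    (∀ n > 0, ¬ n ∣ k → aeval (ω n ^ k) (qGaussSum a n) = 0) ↔
      ∀ n > 0, rootDefect a k n = 0 := by
  rw [← forall_sum_moebius_smul_eq_zero_iff]
  refine forall₂_congr fun n hn => ?_
  by_cases hk : n ∣ k
  · refine iff_of_true (fun h => absurd hk h) (sum_eq_zero fun d hd => ?_)
    have hdn := Nat.dvd_of_mem_divisors hd
    rw [rootDefect_eq_zero_of_dvd a (Nat.div_pos (Nat.le_of_dvd hn hdn)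
      (Nat.pos_of_dvd_of_pos hdn hn)) ((Nat.div_dvd_of_dvd hdn).trans hk), smul_zero]
  · rw [aeval_ω_pow_qGaussSum_of_not_dvd a hn hk]
    exact ⟨fun h => h hk, fun h _ => h⟩

theorem qGauss_iff_qGaussRoots (a : ℕ → ℤ[X]) : qGauss a ↔ qGaussRoots a :=
  calc qGauss a
      ↔ ∀ n > 0, ∀ k, ¬ n ∣ k → aeval (ω n ^ k) (qGaussSum a n) = 0 :=
        forall₂_congr fun n hn => qInt_dvd_iff hn
    _ ↔ ∀ k, ∀ n > 0, rootDefect a k n = 0 := by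
        simp only [← forall_aeval_ω_pow_qGaussSum_eq_zero_iff]
        exact ⟨fun h k n hn => h n hn k, fun h n hn k => h k n hn⟩
    _ ↔ qGaussRoots a := by
        refine ⟨fun h n i hn _ => sub_eq_zero.mp (h i n hn), fun h k n hn => ?_⟩
        rcases Nat.eq_zero_or_pos k with rfl | hk
        · exact rootDefect_eq_zero_of_dvd a hn (dvd_zero n)
        · exact sub_eq_zero.mpr (h n k hn hk)

theorem cyclotomic_div_gcd_dvd_sub_iff {n : ℕ} (hn : 0 < n) (i : ℕ) (p : ℤ[X]) (c : ℤ) :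
    cyclotomic (n / n.gcd i) ℤ ∣ p - C c ↔ aeval (ω n ^ i) p = c := by
  rw [cyclotomic_dvd_iff_aeval_eq_zero ((isPrimitiveRoot_ω hn).pow_div_gcd hn i)
    (Nat.div_pos (Nat.gcd_le_left i hn) (Nat.gcd_pos_of_pos_left i hn)),
    map_sub, aeval_C, sub_eq_zero, algebraMap_int_eq, eq_intCast]

theorem qGaussRoots_iff_qGaussCyclotomic (a : ℕ → ℤ[X]) : qGaussRoots a ↔ qGaussCyclotomic a := by
  simp only [qGaussRoots, qGaussCyclotomic, aeval_one_eq_intCast]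
  constructor
  · intro h n hn d hd
    have hnd : 0 < n / d := Nat.div_pos (Nat.le_of_dvd hn hd) (Nat.pos_of_dvd_of_pos hd hn)
    have := (cyclotomic_div_gcd_dvd_sub_iff hn (n / d) _ _).mpr (h n (n / d) hn hnd)
    rwa [Nat.gcd_eq_right (Nat.div_dvd_of_dvd hd), Nat.div_div_self hd hn.ne'] at this
  · intro h n i hn _
    refine (cyclotomic_div_gcd_dvd_sub_iff hn i _ _).mp ?_
    have hg := Nat.gcd_dvd_left n i
    simpa only [Nat.div_div_self hg hn.ne'] using h n hn _ (Nat.div_dvd_of_dvd hg)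

theorem stmt0 (a : ℕ → Polynomial ℤ) :
    (qGauss a ↔
      ∀ n i : ℕ, 0 < n → 0 < i →
        Polynomial.aeval (Complex.exp (2 * (Real.pi : ℂ) * Complex.I / (n : ℂ)) ^ i) (a n)
          = Polynomial.aeval (1 : ℂ) (a (Nat.gcd n i)))
    ∧ ((∀ n i : ℕ, 0 < n → 0 < i →
        Polynomial.aeval (Complex.exp (2 * (Real.pi : ℂ) * Complex.I / (n : ℂ)) ^ i) (a n)
          = Polynomial.aeval (1 : ℂ) (a (Nat.gcd n i))) ↔
      ∀ n : ℕ, 0 < n → ∀ d : ℕ, d ∣ n →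
        Polynomial.cyclotomic d ℤ ∣ a n - Polynomial.C ((a (n / d)).eval 1)) :=
  ⟨qGauss_iff_qGaussRoots a, qGaussRoots_iff_qGaussCyclotomic a⟩
end

section
/- Let S be a set of primes. (1) If a sequence {a_n(q)}_{n≥1} ⊆ ℤ[q] satisfies the q-Gauss congruences with respect to S, then for all primes p ∈ S and all positive integers n, k one has a_{p^k n}(q) ≡ a_{p^{k−1} n}(q^p) mod [p^k]_q. (2) A sequence {a_n(q)}_{n≥1} ⊆ ℤ[q] satisfies the q-Gauss congruences with respect to the set of all primes if and only if it satisfies the q-Gauss congruences. -/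
/-!
Write `F_c(q) = ∑_{e ∣ c} μ(e) a_{c/e}(q^e)`, so that the `q`-Gauss congruences say
`[c]_q ∣ F_c`, and Möbius inversion gives `a_N(q) = ∑_{c ∣ N} F_c(q^{N/c})`. Substituting
this into `∑_{d ∣ n} μ(d) a_{nm/d}(q^d)` and exchanging the sums, `F_c(q^{nm/c})` gets the
coefficient `∑_{d ∣ gcd(n, nm/c)} μ(d)`, which vanishes unless `gcd(n, nm/c) = 1`. In that case
`n ∣ c`, so `[n]_q ∣ [c]_q ∣ F_c`, and `[n]_q ∣ [n]_{q^e}` whenever `e` is coprime to `n`. Hence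
the `q`-Gauss congruences hold with respect to every set of primes, and `m = 1` gives the
converse. For `n = p^k` only the divisors `1` and `p` have `μ(d) ≠ 0`, which gives part (1).
-/

open Polynomial Finset

/-- `n ∈ ℕ_S`: `n` is a positive integer divisible only by primes from `S`. -/
def NatS (S : Set ℕ) (n : ℕ) : Prop := 0 < n ∧ ∀ p : ℕ, p.Prime → p ∣ n → p ∈ S

/-- `{a_n(q)}` satisfies the `q`-Gauss congruences with respect to `S`:
for all `n ∈ ℕ_S` and `m ≥ 1`, `∑_{d ∣ n} μ(d) a_{nm/d}(q^d) ≡ 0 mod [n]_q`. -/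
def qGaussWrt (S : Set ℕ) (a : ℕ → Polynomial ℤ) : Prop :=
  ∀ n m : ℕ, NatS S n → 0 < m →
    qInt n ∣ ∑ d ∈ n.divisors,
      Polynomial.C (ArithmeticFunction.moebius d) * ((a (n * m / d)).comp (X ^ d))

open ArithmeticFunction
open scoped ArithmeticFunction.Moebius

lemma Nat.div_mul_eq_div_of_mul_dvd {d c N : ℕ} (h : d * c ∣ N) : N / (d * c) * d = N / c := by
  obtain ⟨k, rfl⟩ := h
  rcases d.eq_zero_or_pos with rfl | hd
  · simp
  rcases c.eq_zero_or_pos with rfl | hc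
  · simp
  rw [Nat.mul_div_cancel_left _ (by positivity), mul_right_comm, Nat.mul_div_cancel _ hc, mul_comm]

lemma Nat.mem_divisors_and_mem_divisors_div_iff {n N d c : ℕ} (hnN : n ∣ N) (hN : N ≠ 0) :
    d ∈ n.divisors ∧ c ∈ (N / d).divisors ↔
      d ∈ (n.gcd (N / c)).divisors ∧ c ∈ N.divisors := by
  have hn : n ≠ 0 := by rintro rfl; exact hN (zero_dvd_iff.mp hnN)
  simp only [Nat.mem_divisors, Nat.dvd_gcd_iff, ne_eq, Nat.gcd_eq_zero_iff, hn, hN, false_and,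
    not_false_eq_true, and_true]
  constructor
  · rintro ⟨hdn, hc, -⟩
    have hdc := (Nat.dvd_div_iff_mul_dvd (hdn.trans hnN)).mp hc
    have hcN : c ∣ N := (Dvd.intro_left _ rfl).trans hdc
    exact ⟨⟨hdn, (Nat.dvd_div_iff_mul_dvd hcN).mpr (by rwa [mul_comm])⟩, hcN⟩
  · rintro ⟨⟨hdn, hd⟩, hcN⟩
    have hdN := hdn.trans hnN
    refine ⟨hdn, (Nat.dvd_div_iff_mul_dvd hdN).mpr ?_, ?_⟩
    · rw [mul_comm]; exact (Nat.dvd_div_iff_mul_dvd hcN).mp hd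
    · exact (Nat.div_pos (Nat.le_of_dvd (Nat.pos_of_ne_zero hN) hdN)
        (Nat.pos_of_dvd_of_pos hdn (Nat.pos_of_ne_zero hn))).ne'

lemma qInt_mul_X_sub_one (n : ℕ) : qInt n * (X - 1) = X ^ n - 1 := geom_sum_mul X n

lemma qInt_dvd_X_pow_sub_one (n : ℕ) : qInt n ∣ X ^ n - 1 := Dvd.intro _ (qInt_mul_X_sub_one n)

lemma qInt_dvd_qInt {n c : ℕ} (h : n ∣ c) : qInt n ∣ qInt c := by
  have h' : (X : ℤ[X]) ^ n - 1 ∣ X ^ c - 1 := dvd_pow_sub_one_of_dvd h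
  rwa [← qInt_mul_X_sub_one, ← qInt_mul_X_sub_one,
    mul_dvd_mul_iff_right (by simpa using X_sub_C_ne_zero (1 : ℤ))] at h'

lemma qInt_dvd_X_pow_sub_X_pow_mod (n i : ℕ) : qInt n ∣ X ^ i - X ^ (i % n) := by
  have h : (X : ℤ[X]) ^ i - X ^ (i % n) = X ^ (i % n) * ((X ^ n) ^ (i / n) - 1) := by
    rw [mul_sub, mul_one, ← pow_mul, ← pow_add, Nat.mod_add_div]
  rw [h]
  exact ((qInt_dvd_X_pow_sub_one n).trans (sub_one_dvd_pow_sub_one _ _)).mul_left _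

lemma sum_range_X_pow_mul_mod_of_coprime {e n : ℕ} (h : e.Coprime n) :
    ∑ i ∈ range n, (X : ℤ[X]) ^ (e * i % n) = qInt n := by
  have hinj : Set.InjOn (fun i ↦ e * i % n) (range n) := by
    intro i hi j hj hij
    have := Nat.ModEq.cancel_left_of_coprime h.symm hij
    rwa [Nat.ModEq, Nat.mod_eq_of_lt (mem_range.mp hi), Nat.mod_eq_of_lt (mem_range.mp hj)] at this
  rcases n.eq_zero_or_pos with rfl | hn
  · simp [qInt]
  have hmaps : Set.MapsTo (fun i ↦ e * i % n) (range n) (range n) :=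
    fun i _ ↦ mem_range.mpr (Nat.mod_lt _ hn)
  exact sum_nbij _ hmaps hinj (surjOn_of_injOn_of_card_le _ hmaps hinj le_rfl) fun _ _ ↦ rfl

/-- Modulo `[n]_q` we have `q ^ n ≡ 1`, and `i ↦ e * i % n` permutes `{0, …, n - 1}`. -/
lemma qInt_dvd_qInt_comp_X_pow_of_coprime {e n : ℕ} (h : e.Coprime n) :
    qInt n ∣ (qInt n).comp (X ^ e) := by
  have hsplit : (qInt n).comp (X ^ e) =
      ∑ i ∈ range n, (X ^ (e * i) - X ^ (e * i % n)) + qInt n := by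
    rw [sum_sub_distrib, sum_range_X_pow_mul_mod_of_coprime h, sub_add_cancel, qInt,
      Polynomial.sum_comp]
    simp only [pow_comp, X_comp, pow_mul]
  rw [hsplit]
  exact dvd_add (dvd_sum fun i _ ↦ qInt_dvd_X_pow_sub_X_pow_mod n _) dvd_rfl

lemma sum_divisors_moebius (n : ℕ) :
    ∑ d ∈ n.divisors, μ d = if n = 1 then 1 else 0 := by
  rw [← coe_mul_zeta_apply, moebius_mul_coe_zeta, one_apply]

noncomputable def qMoebiusTransform (a : ℕ → ℤ[X]) (n : ℕ) : ℤ[X] :=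
  ∑ d ∈ n.divisors, C (μ d) * (a (n / d)).comp (X ^ d)

lemma qGauss_iff (a : ℕ → ℤ[X]) :
    qGauss a ↔ ∀ n, 0 < n → qInt n ∣ qMoebiusTransform a n := Iff.rfl

lemma sum_divisors_qMoebiusTransform_comp (a : ℕ → ℤ[X]) {N : ℕ} (hN : 0 < N) :
    ∑ c ∈ N.divisors, (qMoebiusTransform a c).comp (X ^ (N / c)) = a N := by
  have inversion := (sum_eq_iff_sum_smul_moebius_eq_on
    (f := fun c ↦ (qMoebiusTransform a c).comp (X ^ (N / c)))
    (g := fun c ↦ (a c).comp (X ^ (N / c))) {c | c ∣ N} fun _ _ ↦ dvd_trans).mpr ?_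
      N hN dvd_rfl
  · simpa [Nat.div_self hN] using inversion
  intro c _ hcN
  rw [Nat.sum_divisorsAntidiagonal (fun d e ↦ μ d • (a e).comp (X ^ (N / e))),
    qMoebiusTransform, Polynomial.sum_comp]
  refine sum_congr rfl fun d hd ↦ ?_
  have hdc : d ∣ c := Nat.dvd_of_mem_divisors hd
  have hdcN : d * (c / d) ∣ N := by rwa [Nat.mul_div_cancel' hdc]
  rw [mul_comp, C_comp, comp_assoc, pow_comp, X_comp, ← pow_mul,
    ← Nat.div_mul_eq_div_of_mul_dvd hdcN, Nat.mul_div_cancel' hdc, zsmul_eq_mul, ← C_eq_intCast,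
    Int.cast_id]

lemma qMoebiusTransform_comp_mul_right (a : ℕ → ℤ[X]) (m n : ℕ) :
    qMoebiusTransform (fun j ↦ a (j * m)) n =
      ∑ d ∈ n.divisors, C (μ d) * (a (n * m / d)).comp (X ^ d) :=
  sum_congr rfl fun d hd ↦ by dsimp only; rw [Nat.div_mul_right_comm (Nat.dvd_of_mem_divisors hd)]

lemma comp_X_pow_eq_sum_divisors_qMoebiusTransform_comp (a : ℕ → ℤ[X]) {d N : ℕ}
    (hd : 0 < d) (hdN : d ∣ N) (hN : 0 < N) :
    (a (N / d)).comp (X ^ d) =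
      ∑ c ∈ (N / d).divisors, (qMoebiusTransform a c).comp (X ^ (N / c)) := by
  have hpos : 0 < N / d := Nat.div_pos (Nat.le_of_dvd hN hdN) hd
  rw [← sum_divisors_qMoebiusTransform_comp a hpos, Polynomial.sum_comp]
  refine sum_congr rfl fun c hc ↦ ?_
  have hdc : d * c ∣ N := (Nat.dvd_div_iff_mul_dvd hdN).mp (Nat.dvd_of_mem_divisors hc)
  rw [comp_assoc, pow_comp, X_comp, ← pow_mul', Nat.div_div_eq_div_mul,
    Nat.div_mul_eq_div_of_mul_dvd hdc]

theorem qGauss.comp_mul_right {a : ℕ → ℤ[X]} (h : qGauss a) {m : ℕ} (hm : 0 < m) :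
    qGauss (fun j ↦ a (j * m)) := by
  rw [qGauss_iff] at h ⊢
  intro n hn
  have hN : 0 < n * m := Nat.mul_pos hn hm
  have expand : ∀ d ∈ n.divisors,
      C (μ d) * (a (n * m / d)).comp (X ^ d) =
        ∑ c ∈ (n * m / d).divisors,
          C (μ d) * (qMoebiusTransform a c).comp (X ^ (n * m / c)) := by
    intro d hd
    rw [comp_X_pow_eq_sum_divisors_qMoebiusTransform_comp a (Nat.pos_of_mem_divisors hd)
      ((Nat.dvd_of_mem_divisors hd).mul_right m) hN, mul_sum]
  rw [qMoebiusTransform_comp_mul_right, sum_congr rfl expand,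
    sum_comm' fun d c ↦ Nat.mem_divisors_and_mem_divisors_div_iff (dvd_mul_right n m) hN.ne']
  refine dvd_sum fun c hc ↦ ?_
  rw [← sum_mul, ← map_sum, sum_divisors_moebius]
  split_ifs with hcop
  · have hnc : n ∣ c := Nat.Coprime.dvd_of_dvd_mul_right hcop
      (by rw [Nat.mul_div_cancel' (Nat.dvd_of_mem_divisors hc)]; exact dvd_mul_right n m)
    rw [C_1, one_mul]
    exact (qInt_dvd_qInt_comp_X_pow_of_coprime (Nat.coprime_comm.mp hcop)).trans
      (map_dvd (compRingHom _) ((qInt_dvd_qInt hnc).trans (h c (Nat.pos_of_mem_divisors hc))))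
  · rw [C_0, zero_mul]
    exact dvd_zero _

lemma qMoebiusTransform_prime_pow (a : ℕ → ℤ[X]) {p k : ℕ} (hp : p.Prime) (hk : k ≠ 0) :
    qMoebiusTransform a (p ^ k) = a (p ^ k) - (a (p ^ (k - 1))).comp (X ^ p) := by
  obtain ⟨j, rfl⟩ := Nat.exists_eq_add_one_of_ne_zero hk
  have higher : ∀ i ∈ range j, C (μ (p ^ (i + 1 + 1))) *
      (a (p ^ (j + 1) / p ^ (i + 1 + 1))).comp (X ^ p ^ (i + 1 + 1)) = 0 := fun i _ ↦ by
    simp [moebius_apply_prime_pow hp]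
  rw [qMoebiusTransform, Nat.sum_divisors_prime_pow hp, sum_range_succ', sum_range_succ',
    sum_eq_zero higher]
  simp [moebius_apply_prime hp, pow_succ, Nat.mul_div_cancel _ hp.pos, sub_eq_neg_add]

lemma natS_prime_pow {S : Set ℕ} {p : ℕ} (hpS : p ∈ S) (hp : p.Prime) (k : ℕ) :
    NatS S (p ^ k) :=
  ⟨pow_pos hp.pos k, fun _ hq hqp ↦
    (Nat.prime_dvd_prime_iff_eq hq hp).mp (hq.dvd_of_dvd_pow hqp) ▸ hpS⟩

lemma natS_setOf_prime_iff {n : ℕ} : NatS {p | p.Prime} n ↔ 0 < n :=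
  ⟨And.left, fun hn ↦ ⟨hn, fun _ hp _ ↦ hp⟩⟩

lemma qGaussWrt_iff (S : Set ℕ) (a : ℕ → ℤ[X]) :
    qGaussWrt S a ↔
      ∀ n m, NatS S n → 0 < m → qInt n ∣ qMoebiusTransform (fun j ↦ a (j * m)) n := by
  simp only [qGaussWrt, qMoebiusTransform_comp_mul_right]

theorem stmt3 (S : Set ℕ) (hS : ∀ p ∈ S, Nat.Prime p) (a : ℕ → Polynomial ℤ) :
    (qGaussWrt S a →
      ∀ p ∈ S, ∀ n k : ℕ, 0 < n → 0 < k →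
        qInt (p ^ k) ∣ a (p ^ k * n) - (a (p ^ (k - 1) * n)).comp (X ^ p))
    ∧ (qGaussWrt {p : ℕ | Nat.Prime p} a ↔ qGauss a) := by
  refine ⟨fun h p hpS n k hn hk ↦ ?_, fun h ↦ ?_, fun h ↦ ?_⟩
  · have hp := hS p hpS
    simpa only [qMoebiusTransform_prime_pow _ hp hk.ne'] using
      (qGaussWrt_iff S a).mp h (p ^ k) n (natS_prime_pow hpS hp k) hn
  · refine (qGauss_iff a).mpr fun n hn ↦ ?_
    simpa using (qGaussWrt_iff _ a).mp h n 1 (natS_setOf_prime_iff.mpr hn) one_pos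
  · refine (qGaussWrt_iff _ a).mpr fun n m hn hm ↦ ?_
    exact (qGauss_iff _).mp (h.comp_mul_right hm) n (natS_setOf_prime_iff.mp hn)
end

section
/- Assume {a_n(q)}_{n≥1} ⊆ ℤ[q] satisfies the q-Gauss congruences with respect to a set of primes S. Let n, m be positive integers with n ∈ ℕ_S. Then a_{nm}(q) ≡ G_{g,n}(q) mod [n]_q, where g : D_n → ℂ is given by g(d) = a_{dm}(1); that is, the remainder of a_{nm}(q) upon division by [n]_q is G_{g,n}(q). -/
/-!
The `d`-th term of `G_{g,n}` has degree at most `(d - 1)(n/d) ≤ n - 2`. Since the roots of `[n]_q`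
are the `n`-th roots of unity `ζ ≠ 1`, all simple, divisibility reduces to `a_{nm}(ζ) = G_{g,n}(ζ)`.
If `ζ` has order `k > 1`, then `k ∈ ℕ_S`, and the `q`-Gauss congruence for `k` evaluated at `ζ`,
together with induction on `k`, gives `a_{kt}(ζ) = a_t(1)`. At the same `ζ` the term of `G_{g,n}`
indexed by `d` is `∑_{e ∣ d} μ(d/e) g(e)` if `k ∣ n/d` and `0` otherwise, so Möbius inversion
collapses `G_{g,n}(ζ)` to `g(n/k) = a_{(n/k)m}(1)`.
-/

open Polynomial Finset

/-- The `q`-analogue `[n]_q` in `ℂ[q]`. -/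
noncomputable def qIntC (n : ℕ) : Polynomial ℂ := ∑ i ∈ Finset.range n, X ^ i

/-- The polynomial `G_{g,n}(q) = ∑_{d ∈ D_n} ([n]_q/[n/d]_q) ⬝ (∑_{e ∣ d} μ(d/e) g(e))/d ∈ ℂ[q]`,
where `D_n` is the set of proper divisors of `n` and
`[n]_q/[n/d]_q = ∑_{i=0}^{d-1} q^{i·(n/d)}`. -/
noncomputable def Gpoly (n : ℕ) (g : ℕ → ℂ) : Polynomial ℂ :=
  ∑ d ∈ n.divisors.erase n,
    (∑ i ∈ Finset.range d, (X : Polynomial ℂ) ^ (i * (n / d))) *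
      Polynomial.C ((∑ e ∈ d.divisors, (ArithmeticFunction.moebius (d / e) : ℂ) * g e) / (d : ℂ))

section Field

variable {K : Type*} [Field K]

lemma X_pow_sub_one_dvd_of_forall_eval_eq_zero {n : ℕ} (hn : 0 < n) {ζ : K}
    (hζ : IsPrimitiveRoot ζ n) {p : K[X]} (hp : ∀ z ∈ nthRootsFinset n (1 : K), p.eval z = 0) :
    X ^ n - 1 ∣ p := by
  rw [X_pow_sub_one_eq_prod hn hζ]
  refine Finset.prod_dvd_of_coprime ?_ fun z hz => dvd_iff_isRoot.2 (hp z hz)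
  exact (pairwise_coprime_X_sub_C (s := fun z : K => z) Function.injective_id).set_pairwise _

lemma geom_sum_X_dvd_of_forall_eval_eq_zero {n : ℕ} (hn : 0 < n) {ζ : K}
    (hζ : IsPrimitiveRoot ζ n) {p : K[X]} (hp : ∀ z : K, z ^ n = 1 → z ≠ 1 → p.eval z = 0) :
    ∑ i ∈ range n, (X : K[X]) ^ i ∣ p := by
  have hX : (X - 1 : K[X]) ≠ 0 := X_sub_C_ne_zero 1
  refine (mul_dvd_mul_iff_right hX).1 ?_
  rw [geom_sum_mul]
  refine X_pow_sub_one_dvd_of_forall_eval_eq_zero hn hζ fun z hz => ?_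
  rcases eq_or_ne z 1 with rfl | hz1
  · simp
  · simp [hp z ((mem_nthRootsFinset hn 1).1 hz) hz1]

lemma IsPrimitiveRoot.geom_sum_pow_eq_ite {ζ : K} {k j d : ℕ} (hζ : IsPrimitiveRoot ζ k)
    (hk : k ∣ j * d) : ∑ i ∈ range d, (ζ ^ j) ^ i = if k ∣ j then (d : K) else 0 := by
  split_ifs with hkj
  · simp [(hζ.pow_eq_one_iff_dvd j).2 hkj]
  · have hw : ζ ^ j ≠ 1 := fun h => hkj ((hζ.pow_eq_one_iff_dvd j).1 h)
    rw [geom_sum_eq hw, ← pow_mul, (hζ.pow_eq_one_iff_dvd _).2 hk, sub_self, zero_div]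

end Field

section Ring

variable {R : Type*} [Ring R]

lemma sum_divisors_moebius_eq_zero {k : ℕ} (hk : 1 < k) :
    ∑ d ∈ k.divisors, (ArithmeticFunction.moebius d : R) = 0 := by
  have h := congrArg (· k) ArithmeticFunction.moebius_mul_coe_zeta
  simp only [ArithmeticFunction.coe_mul_zeta_apply, ArithmeticFunction.one_apply_ne hk.ne'] at h
  rw [← Int.cast_sum, h, Int.cast_zero]

lemma sum_divisors_sum_moebius_mul (g : ℕ → R) {N : ℕ} (hN : 0 < N) :
    ∑ d ∈ N.divisors, ∑ e ∈ d.divisors, (ArithmeticFunction.moebius (d / e) : R) * g e = g N := by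
  refine ArithmeticFunction.sum_eq_iff_sum_mul_moebius_eq.2 (fun d _ => ?_) N hN
  exact Nat.sum_divisorsAntidiagonal' (fun x y => (ArithmeticFunction.moebius x : R) * g y)

end Ring

lemma natDegree_qIntC (n : ℕ) : (qIntC n).natDegree = n - 1 := by
  rcases Nat.eq_zero_or_pos n with rfl | hn
  · simp [qIntC]
  have h := (monic_geom_sum_X (R := ℂ) hn.ne').natDegree_mul (monic_X_sub_C 1)
  rw [natDegree_X_sub_C, C_1, geom_sum_mul, ← C_1, natDegree_X_pow_sub_C] at h
  rw [qIntC]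
  omega

lemma degree_qIntC {n : ℕ} (hn : 0 < n) : (qIntC n).degree = (n - 1 : ℕ) := by
  have hmonic : (qIntC n).Monic := monic_geom_sum_X hn.ne'
  rw [degree_eq_natDegree hmonic.ne_zero, natDegree_qIntC]

lemma mul_div_lt_pred_of_mem_divisors_erase {n d i : ℕ} (hd : d ∈ n.divisors.erase n)
    (hi : i < d) : i * (n / d) < n - 1 := by
  obtain ⟨hdn, ⟨q, rfl⟩, hn0⟩ : d ≠ n ∧ d ∣ n ∧ n ≠ 0 := by simpa using hd
  have hd0 : 0 < d := Nat.pos_of_ne_zero (left_ne_zero_of_mul hn0)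
  have hq : 2 ≤ q := by
    rcases q with _ | _ | q <;> simp_all
  rw [Nat.mul_div_cancel_left q hd0]
  have := Nat.mul_le_mul_right q (hi : i + 1 ≤ d)
  rw [Nat.succ_mul] at this
  omega

lemma degree_Gpoly_lt {n : ℕ} (hn : 0 < n) (g : ℕ → ℂ) :
    (Gpoly n g).degree < (qIntC n).degree := by
  rw [degree_qIntC hn, ← mem_degreeLT]
  refine Submodule.sum_mem _ fun d hd => ?_
  rw [mul_comm, ← smul_eq_C_mul]
  refine Submodule.smul_mem _ _ (Submodule.sum_mem _ fun i hi => ?_)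
  rw [mem_degreeLT, degree_X_pow]
  exact_mod_cast mul_div_lt_pred_of_mem_divisors_erase hd (mem_range.1 hi)

lemma NatS.of_dvd {S : Set ℕ} {n d : ℕ} (hn : NatS S n) (hd : d ∣ n) : NatS S d :=
  ⟨Nat.pos_of_dvd_of_pos hd hn.1, fun p hp hpd => hn.2 p hp (hpd.trans hd)⟩

lemma filter_divisors_erase_dvd_div {n k : ℕ} (hn : 0 < n) (hkn : k ∣ n) (hk : 1 < k) :
    (n.divisors.erase n).filter (fun d => k ∣ n / d) = (n / k).divisors := by
  ext d
  simp only [mem_filter, mem_erase, Nat.mem_divisors]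
  constructor
  · rintro ⟨⟨-, hdn, -⟩, hkd⟩
    refine ⟨(Nat.dvd_div_iff_mul_dvd hkn).2 ?_, (Nat.div_pos (Nat.le_of_dvd hn hkn) (by omega)).ne'⟩
    rw [mul_comm]
    exact (Nat.dvd_div_iff_mul_dvd hdn).1 hkd
  · rintro ⟨hdk, hnk⟩
    have hdn : d ∣ n := hdk.trans (Nat.div_dvd_of_dvd hkn)
    refine ⟨⟨?_, hdn, hn.ne'⟩, (Nat.dvd_div_iff_mul_dvd hdn).2 ?_⟩
    · exact ((Nat.le_of_dvd (Nat.pos_of_ne_zero hnk) hdk).trans_lt (Nat.div_lt_self hn hk)).ne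
    · rw [mul_comm]
      exact (Nat.dvd_div_iff_mul_dvd hkn).1 hdk

lemma eval_Gpoly_of_isPrimitiveRoot {n k : ℕ} (hn : 0 < n) (hkn : k ∣ n) (hk : 1 < k)
    {ζ : ℂ} (hζ : IsPrimitiveRoot ζ k) (g : ℕ → ℂ) : (Gpoly n g).eval ζ = g (n / k) := by
  simp only [Gpoly, eval_finsetSum, eval_mul, eval_C, eval_pow, eval_X, pow_mul']
  have hgeom : ∀ d ∈ n.divisors.erase n,
      ∑ i ∈ range d, (ζ ^ (n / d)) ^ i = if k ∣ n / d then (d : ℂ) else 0 := fun d hd =>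
    hζ.geom_sum_pow_eq_ite <| by
      rwa [Nat.div_mul_cancel (Nat.dvd_of_mem_divisors (mem_of_mem_erase hd))]
  rw [sum_congr rfl fun d hd => by rw [hgeom d hd, ite_mul, zero_mul], ← sum_filter,
    filter_divisors_erase_dvd_div hn hkn hk, ← sum_divisors_sum_moebius_mul g
      (Nat.div_pos (Nat.le_of_dvd hn hkn) (by omega))]
  refine sum_congr rfl fun d hd => mul_div_cancel₀ _ ?_
  exact Nat.cast_ne_zero.2 (Nat.pos_of_mem_divisors hd).ne'

lemma qIntC_eq_map (n : ℕ) : qIntC n = (qInt n).map (Int.castRingHom ℂ) := by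
  simp [qIntC, qInt, Polynomial.map_sum]

lemma qGaussWrt.eval_map_isPrimitiveRoot {S : Set ℕ} {a : ℕ → ℤ[X]} (ha : qGaussWrt S a)
    {k t : ℕ} (hk : NatS S k) (ht : 0 < t) {ζ : ℂ} (hζ : IsPrimitiveRoot ζ k) :
    ((a (k * t)).map (Int.castRingHom ℂ)).eval ζ = (((a t).eval 1 : ℤ) : ℂ) := by
  induction k using Nat.strong_induction_on generalizing ζ with
  | _ k IH =>
  obtain rfl | hk1 : k = 1 ∨ 1 < k := by have := hk.1; omega
  · rw [IsPrimitiveRoot.one_right_iff.1 hζ, one_mul, eval_one_map, eq_intCast]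
  set c : ℂ := (((a t).eval 1 : ℤ) : ℂ)
  have hcong : ∑ d ∈ k.divisors,
      (ArithmeticFunction.moebius d : ℂ) * ((a (k * t / d)).map (Int.castRingHom ℂ)).eval (ζ ^ d)
        = 0 := by
    obtain ⟨r, hr⟩ := ha k t hk ht
    have := congrArg (fun p => (p.map (Int.castRingHom ℂ)).eval ζ) hr
    simpa [← qIntC_eq_map, qIntC, hζ.geom_sum_eq_zero hk1, Polynomial.map_sum, eval_finsetSum,
      Polynomial.map_comp] using this
  have hdiv : ∀ d ∈ k.divisors, d ≠ 1 →
      ((a (k * t / d)).map (Int.castRingHom ℂ)).eval (ζ ^ d) = c := by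
    intro d hd hd1
    obtain ⟨e, he⟩ := Nat.dvd_of_mem_divisors hd
    have hd0 := Nat.pos_of_mem_divisors hd
    have he_lt : e < k := by
      rw [he]
      exact lt_mul_left (Nat.pos_of_mul_pos_left (he ▸ hk.1)) (by omega)
    rw [he, mul_assoc, Nat.mul_div_cancel_left _ hd0]
    exact IH e he_lt (hk.of_dvd (he ▸ dvd_mul_left e d)) (hζ.pow hk.1 he)
  have hsingle : ∑ d ∈ k.divisors, (ArithmeticFunction.moebius d : ℂ) *
      (((a (k * t / d)).map (Int.castRingHom ℂ)).eval (ζ ^ d) - c)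
        = ((a (k * t)).map (Int.castRingHom ℂ)).eval ζ - c := by
    rw [sum_eq_single 1 (fun d hd hd1 => by rw [hdiv d hd hd1, sub_self, mul_zero])
      (fun h => absurd (Nat.one_mem_divisors.2 (by omega)) h)]
    simp
  rw [← sub_eq_zero, ← hsingle]
  simp only [mul_sub, sum_sub_distrib, ← sum_mul, hcong, sum_divisors_moebius_eq_zero hk1,
    zero_mul, sub_zero]

theorem stmt4_general (S : Set ℕ) (a : ℕ → Polynomial ℤ)
    (ha : qGaussWrt S a) (n m : ℕ) (hn : NatS S n) (hm : 0 < m) :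
    (Gpoly n (fun d => (((a (d * m)).eval 1 : ℤ) : ℂ))).degree < (qIntC n).degree
    ∧ qIntC n ∣ (a (n * m)).map (Int.castRingHom ℂ)
        - Gpoly n (fun d => (((a (d * m)).eval 1 : ℤ) : ℂ)) := by
  refine ⟨degree_Gpoly_lt hn.1 _, ?_⟩
  refine geom_sum_X_dvd_of_forall_eval_eq_zero hn.1 (Complex.isPrimitiveRoot_exp n hn.1.ne')
    fun ζ hζn hζ1 => ?_
  set k := orderOf ζ
  have hζ : IsPrimitiveRoot ζ k := IsPrimitiveRoot.orderOf ζ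
  have hkn : k ∣ n := orderOf_dvd_of_pow_eq_one hζn
  have hk1 : 1 < k := by
    have := orderOf_pos_iff.2 (isOfFinOrder_iff_pow_eq_one.2 ⟨n, hn.1, hζn⟩)
    have := mt orderOf_eq_one_iff.1 hζ1
    omega
  have hnm : k * (n / k * m) = n * m := by
    rw [← mul_assoc, Nat.mul_div_cancel' hkn]
  rw [eval_sub, eval_Gpoly_of_isPrimitiveRoot hn.1 hkn hk1 hζ, ← hnm,
    ha.eval_map_isPrimitiveRoot (hn.of_dvd hkn)
      (Nat.mul_pos (Nat.div_pos (Nat.le_of_dvd hn.1 hkn) (by omega)) hm) hζ, sub_self]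

/-- The remainder of `a_{nm}(q)` upon division by `[n]_q` is `G_{g,n}(q)`, `g(d) = a_{dm}(1)`. -/
theorem stmt4 (S : Set ℕ) (hS : ∀ p ∈ S, Nat.Prime p) (a : ℕ → Polynomial ℤ)
    (ha : qGaussWrt S a) (n m : ℕ) (hn : NatS S n) (hm : 0 < m) :
    (Gpoly n (fun d => (((a (d * m)).eval 1 : ℤ) : ℂ))).degree < (qIntC n).degree
    ∧ qIntC n ∣ (a (n * m)).map (Int.castRingHom ℂ)
        - Gpoly n (fun d => (((a (d * m)).eval 1 : ℤ) : ℂ)) :=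
  stmt4_general S a ha n m hn hm
end

section
/- Assume {a_n(q)}_{n≥1} ⊆ ℤ[q] satisfies the q-Gauss congruences of order r with respect to a set of primes S, for some r ≥ 1. Let n ≥ 2 and m ≥ 1 be integers with n ∈ ℕ_S, and let p be the smallest prime divisor of n. Then ∑_{d|n} μ(n/d) a_{md}(1) ≡ 0 mod n^{1+min{p−2, r−1}}. -/
/-!
Put `A(q) = ∑_{d ∣ n} μ(d) a_{nm/d}(q^d)`, so that the sum in question is `A(1)`, and let
`s = min(p - 2, r - 1)`. With `D = q d/dq`, the order-`r` congruences make `(DʲA)(ω)` depend only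
on the order of the `n`-th root of unity `ω` for `1 ≤ j ≤ s`, because `Dʲ` is an integral
combination of the operators `qⁱ dⁱ/dqⁱ`, `1 ≤ i ≤ j`; for `j = 0` this follows from `[n]_q ∣ A`.
By Fourier inversion on `ℤ/n`, the moments `∑_{k ≡ c} A_k kʲ`, `j ≤ s`, are then unchanged when
`c` is multiplied by a unit. Since `1, …, s + 1 < p` are units mod `n`, the value at `t` of
`P(t) = ∑_{k ≡ 1} A_k (t - k)ˢ` equals `∑_{k ≡ t} A_k (t - k)ˢ ≡ 0 mod nˢ` for `t = 1, …, s + 1`,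
so the `s`-th finite difference `s! ∑_{k ≡ 1} A_k` of `P` is divisible by `nˢ`, and `s!` is prime
to `n`. Finally `[n]_q ∣ A` gives `A(1) = n ∑_{k ≡ 1} A_k`.
-/

open Polynomial Finset

/-- `{a_n(q)}` satisfies the `q`-Gauss congruences of order `r` with respect to `S`:
it satisfies the `q`-Gauss congruences with respect to `S`, and for all `m ≥ 1`, `n ∈ ℕ_S` and
`1 ≤ j ≤ r - 1`, the function `μ_n → ℂ`, `ω ↦ ω^j a_{nm}^{(j)}(ω)` depends only on `ord(ω)`. -/
def qGaussOrderWrt (S : Set ℕ) (r : ℕ) (a : ℕ → Polynomial ℤ) : Prop :=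
  qGaussWrt S a ∧
    ∀ m n : ℕ, 0 < m → NatS S n → ∀ j : ℕ, 1 ≤ j → j ≤ r - 1 →
      ∀ ω₁ ω₂ : ℂ, ω₁ ^ n = 1 → ω₂ ^ n = 1 → orderOf ω₁ = orderOf ω₂ →
        ω₁ ^ j * Polynomial.aeval ω₁
            ((fun p : Polynomial ℤ => Polynomial.derivative p)^[j] (a (n * m)))
          = ω₂ ^ j * Polynomial.aeval ω₂
            ((fun p : Polynomial ℤ => Polynomial.derivative p)^[j] (a (n * m)))

open scoped Nat

noncomputable def eulerOp (R : Type*) [CommSemiring R] : R[X] →ₗ[R] R[X] :=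
  LinearMap.mulLeft R X ∘ₗ derivative

section EulerOperator

variable {R : Type*} [CommSemiring R]

lemma eulerOp_apply (f : R[X]) : eulerOp R f = X * derivative f := rfl

lemma coeff_eulerOp_pow (j : ℕ) (f : R[X]) (k : ℕ) :
    ((eulerOp R ^ j) f).coeff k = (k : R) ^ j * f.coeff k := by
  induction j generalizing f with
  | zero => simp
  | succ j ih =>
    rw [pow_succ, Module.End.mul_apply, ih, eulerOp_apply]
    rcases k with _ | k
    · simp
    · simp [coeff_X_mul, coeff_derivative, pow_succ]
      ring

lemma eulerOp_comp_X_pow (f : R[X]) (e : ℕ) :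
    eulerOp R (f.comp (X ^ e)) = (e : R) • (eulerOp R f).comp (X ^ e) := by
  rcases e with _ | e
  · simp [eulerOp_apply]
  · simp only [eulerOp_apply, derivative_comp, derivative_X_pow, mul_comp, X_comp, smul_eq_C_mul]
    simp only [add_tsub_cancel_right, pow_succ]
    push_cast
    ring

lemma eulerOp_pow_comp_X_pow (j : ℕ) (f : R[X]) (e : ℕ) :
    (eulerOp R ^ j) (f.comp (X ^ e)) = ((e : R) ^ j) • ((eulerOp R ^ j) f).comp (X ^ e) := by
  induction j generalizing f with
  | zero => simp
  | succ j ih =>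
    rw [pow_succ', Module.End.mul_apply, Module.End.mul_apply, ih, map_smul, eulerOp_comp_X_pow,
      smul_smul, pow_succ, mul_comm]

lemma eulerOp_X_pow_mul_iterate_derivative (f : R[X]) (i : ℕ) :
    eulerOp R (X ^ i * derivative^[i] f) =
      (i : R) • (X ^ i * derivative^[i] f) + X ^ (i + 1) * derivative^[i + 1] f := by
  rw [eulerOp_apply, derivative_mul, derivative_X_pow, Function.iterate_succ_apply',
    smul_eq_C_mul]
  rcases i with _ | i
  · simp
  · simp only [add_tsub_cancel_right, pow_succ]
    push_cast
    ring

lemma eulerOp_pow_mem_span (f : R[X]) {j : ℕ} (hj : 1 ≤ j) :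
    (eulerOp R ^ j) f ∈
      Submodule.span R ((fun i ↦ X ^ i * derivative^[i] f) '' Set.Icc 1 j) := by
  induction j, hj using Nat.le_induction with
  | base => exact Submodule.subset_span ⟨1, by simp, by simp [eulerOp_apply]⟩
  | succ j hj ih =>
    rw [pow_succ', Module.End.mul_apply]
    have hmap := Submodule.mem_map_of_mem (f := eulerOp R) ih
    rw [Submodule.map_span] at hmap
    refine Submodule.span_le.mpr ?_ hmap
    rintro _ ⟨_, ⟨i, ⟨hi1, hij⟩, rfl⟩, rfl⟩
    rw [eulerOp_X_pow_mul_iterate_derivative]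
    exact add_mem (Submodule.smul_mem _ _ (Submodule.subset_span ⟨i, ⟨hi1, by omega⟩, rfl⟩))
      (Submodule.subset_span ⟨i + 1, ⟨by omega, by omega⟩, rfl⟩)

lemma support_eulerOp_pow_subset (j : ℕ) (f : R[X]) :
    ((eulerOp R ^ j) f).support ⊆ f.support := by
  intro k hk
  rw [mem_support_iff, coeff_eulerOp_pow] at hk
  exact mem_support_iff.mpr (right_ne_zero_of_mul hk)

lemma aeval_eulerOp_pow {A : Type*} [CommSemiring A] [Algebra R A] (x : A) (j : ℕ) (f : R[X]) :
    aeval x ((eulerOp R ^ j) f) = ∑ k ∈ f.support, ((k : R) ^ j * f.coeff k) • x ^ k := by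
  rw [aeval_def, eval₂_eq_sum, sum_eq_of_subset _ (by simp) (support_eulerOp_pow_subset j f)]
  simp [coeff_eulerOp_pow, Algebra.smul_def]

lemma aeval_eulerOp_pow_eq_of_aeval_iterate_derivative_eq {A : Type*} [CommSemiring A]
    [Algebra R A] (f : R[X]) {x y : A} {j : ℕ} (hj : 1 ≤ j)
    (h : ∀ i ∈ Set.Icc 1 j,
      x ^ i * aeval x (derivative^[i] f) = y ^ i * aeval y (derivative^[i] f)) :
    aeval x ((eulerOp R ^ j) f) = aeval y ((eulerOp R ^ j) f) := by
  have hspan : Submodule.span R ((fun i ↦ X ^ i * derivative^[i] f) '' Set.Icc 1 j) ≤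
      LinearMap.eqLocus (aeval x).toLinearMap (aeval y).toLinearMap := by
    rw [Submodule.span_le]
    rintro _ ⟨i, hi, rfl⟩
    simpa using h i hi
  exact hspan (eulerOp_pow_mem_span f hj)

end EulerOperator

section FiniteDifferences

variable {ι R : Type*} [CommRing R]

lemma sum_mul_sub_pow_eq_of_moments_eq {K K' : Finset ι} {w x : ι → R} {s : ℕ}
    (h : ∀ j ≤ s, ∑ k ∈ K, w k * x k ^ j = ∑ k ∈ K', w k * x k ^ j) (t : R) :
    ∑ k ∈ K, w k * (t - x k) ^ s = ∑ k ∈ K', w k * (t - x k) ^ s := by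
  have expand : ∀ L : Finset ι, ∑ k ∈ L, w k * (t - x k) ^ s =
      ∑ m ∈ range (s + 1), (-1) ^ (m + s) * t ^ m * s.choose m * ∑ k ∈ L, w k * x k ^ (s - m) := by
    intro L
    simp_rw [sub_pow, Finset.mul_sum]
    rw [Finset.sum_comm]
    exact sum_congr rfl fun m _ ↦ sum_congr rfl fun k _ ↦ by ring
  rw [expand, expand]
  exact sum_congr rfl fun m _ ↦ by rw [h _ (Nat.sub_le s m)]

lemma dvd_factorial_mul_sum_of_dvd (K : Finset ι) (w x : ι → R) {N : R} (s : ℕ) (y : R)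
    (h : ∀ i ≤ s, N ∣ ∑ k ∈ K, w k * (y + i - x k) ^ s) :
    N ∣ s ! * ∑ k ∈ K, w k := by
  have hf : (fun r ↦ ∑ k ∈ K, w k * (r - x k) ^ s) = ∑ k ∈ K, w k • fun r ↦ (r + -x k) ^ s := by
    ext r
    simp [sub_eq_add_neg]
  have hΔ : (fwdDiff 1)^[s] (fun r ↦ ∑ k ∈ K, w k * (r - x k) ^ s) y = s ! * ∑ k ∈ K, w k := by
    simp [hf, fwdDiff_iter_const_smul, fwdDiff_iter_comp_add 1 (fun r : R ↦ r ^ s),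
      fwdDiff_iter_eq_factorial, ← Finset.sum_mul, mul_comm]
  rw [← hΔ, fwdDiff_iter_eq_sum_shift]
  refine Finset.dvd_sum fun i hi ↦ ?_
  rw [zsmul_eq_mul, nsmul_one]
  exact dvd_mul_of_dvd_right (h i (Nat.lt_succ_iff.mp (mem_range.mp hi))) _

end FiniteDifferences

lemma aeval_eq_zero_of_qInt_dvd {A : Type*} [CommRing A] [IsDomain A] {n : ℕ} {f : ℤ[X]}
    (hf : qInt n ∣ f) {ω : A} (hωn : ω ^ n = 1) (hω : ω ≠ 1) : aeval ω f = 0 := by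
  obtain ⟨g, rfl⟩ := hf
  have h := geom_sum_mul ω n
  rw [hωn, sub_self] at h
  simp [qInt, (mul_eq_zero.mp h).resolve_right (sub_ne_zero.mpr hω)]

section StdAddChar

variable {n : ℕ} [NeZero n]

lemma stdAddChar_pow_eq_one (x : ZMod n) : ZMod.stdAddChar x ^ n = 1 := by
  rw [← AddChar.map_nsmul_eq_pow, nsmul_eq_mul, ZMod.natCast_self, zero_mul,
    AddChar.map_zero_eq_one]

lemma stdAddChar_mul (a x : ZMod n) :
    ZMod.stdAddChar (a * x) = ZMod.stdAddChar x ^ a.val := by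
  rw [← AddChar.map_nsmul_eq_pow, nsmul_eq_mul, ZMod.natCast_zmod_val]

lemma orderOf_stdAddChar_unit_mul (u : (ZMod n)ˣ) (x : ZMod n) :
    orderOf (ZMod.stdAddChar ((u : ZMod n) * x) : ℂ) = orderOf (ZMod.stdAddChar x : ℂ) := by
  apply Nat.dvd_antisymm
  · rw [stdAddChar_mul]
    exact orderOf_pow_dvd _
  · conv_lhs => rw [← u.inv_mul_cancel_left x, stdAddChar_mul]
    exact orderOf_pow_dvd _

lemma sum_stdAddChar_nsmul_sub (k : ℕ) (c : ZMod n) :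
    ∑ x : ZMod n, ZMod.stdAddChar (k • x - x * c) = if (k : ZMod n) = c then (n : ℂ) else 0 := by
  have := AddChar.sum_mulShift ((k : ZMod n) - c) (ZMod.isPrimitive_stdAddChar n)
  simpa [sub_eq_zero, ZMod.card, mul_sub, nsmul_eq_mul, mul_comm] using this

end StdAddChar

def classMoment (n : ℕ) (A : ℤ[X]) (c : ZMod n) (j : ℕ) : ℤ :=
  ∑ k ∈ A.support with ((k : ℕ) : ZMod n) = c, A.coeff k * (k : ℤ) ^ j

section ClassMoment

variable {n : ℕ} [NeZero n]

lemma natCast_mul_classMoment (A : ℤ[X]) (c : ZMod n) (j : ℕ) :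
    (n : ℂ) * classMoment n A c j =
      ∑ x : ZMod n, aeval (ZMod.stdAddChar x) ((eulerOp ℤ ^ j) A) *
        ZMod.stdAddChar (-(x * c)) := by
  simp_rw [aeval_eulerOp_pow, Finset.sum_mul, ← AddChar.map_nsmul_eq_pow, smul_mul_assoc,
    ← AddChar.map_add_eq_mul, ← sub_eq_add_neg]
  rw [Finset.sum_comm]
  simp_rw [← Finset.smul_sum, sum_stdAddChar_nsmul_sub, classMoment, Finset.sum_filter]
  push_cast
  rw [Finset.mul_sum]
  refine Finset.sum_congr rfl fun k _ ↦ ?_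
  split_ifs <;> simp [mul_comm]

lemma classMoment_unit_mul (A : ℤ[X]) (j : ℕ) (u : (ZMod n)ˣ) (c : ZMod n)
    (h : ∀ x : ZMod n, aeval (ZMod.stdAddChar ((u : ZMod n) * x)) ((eulerOp ℤ ^ j) A) =
      aeval (ZMod.stdAddChar x) ((eulerOp ℤ ^ j) A)) :
    classMoment n A ((u : ZMod n) * c) j = classMoment n A c j := by
  apply Int.cast_injective (α := ℂ)
  apply mul_left_cancel₀ (NeZero.ne (n : ℂ))
  rw [natCast_mul_classMoment, natCast_mul_classMoment]
  refine Fintype.sum_equiv (Units.mulLeft u) _ _ fun x ↦ ?_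
  rw [Units.mulLeft_apply, h, mul_left_comm, mul_assoc]

lemma pow_dvd_classMoment_one (A : ℤ[X]) {s : ℕ} (hs : s + 1 < n.minFac)
    (hA : ∀ j ≤ s, ∀ ω₁ ω₂ : ℂ, ω₁ ^ n = 1 → ω₂ ^ n = 1 → orderOf ω₁ = orderOf ω₂ →
      aeval ω₁ ((eulerOp ℤ ^ j) A) = aeval ω₂ ((eulerOp ℤ ^ j) A)) :
    (n : ℤ) ^ s ∣ classMoment n A 1 0 := by
  have hmoments : ∀ t : ℕ, 1 ≤ t → t ≤ s + 1 → ∀ j ≤ s,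
      classMoment n A t j = classMoment n A 1 j := by
    intro t ht1 hts j hj
    have hcop : t.Coprime n := (Nat.coprime_of_lt_minFac (by omega) (by omega)).symm
    simpa using classMoment_unit_mul A j (ZMod.unitOfCoprime t hcop) 1 fun x ↦
      hA j hj _ _ (stdAddChar_pow_eq_one _) (stdAddChar_pow_eq_one _)
        (orderOf_stdAddChar_unit_mul _ x)
  have hdvd : (n : ℤ) ^ s ∣ s ! * ∑ k ∈ A.support with ((k : ℕ) : ZMod n) = 1, A.coeff k := by
    refine dvd_factorial_mul_sum_of_dvd _ A.coeff (fun k ↦ (k : ℤ)) s 1 fun i hi ↦ ?_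
    rw [sum_mul_sub_pow_eq_of_moments_eq
      (K' := {k ∈ A.support | ((k : ℕ) : ZMod n) = (1 + i : ℕ)})
      (fun j hj ↦ (hmoments (1 + i) (by omega) (by omega) j hj).symm)]
    refine Finset.dvd_sum fun k hk ↦ dvd_mul_of_dvd_right (pow_dvd_pow_of_dvd ?_ s) _
    rw [← ZMod.intCast_eq_intCast_iff_dvd_sub]
    exact_mod_cast (Finset.mem_filter.mp hk).2
  have hcop : IsCoprime ((n : ℤ) ^ s) (s ! : ℤ) :=
    (Nat.isCoprime_iff_coprime.mpr ((Nat.coprime_factorial_iff (by rintro rfl; simp at hs)).mpr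
      (by omega))).pow_left
  simpa [classMoment] using hcop.dvd_of_dvd_mul_left hdvd

lemma eval_one_eq_natCast_mul_classMoment {A : ℤ[X]} (hA : qInt n ∣ A) (c : ZMod n) :
    A.eval 1 = n * classMoment n A c 0 := by
  apply Int.cast_injective (α := ℂ)
  push_cast
  rw [natCast_mul_classMoment, Fintype.sum_eq_single 0]
  · simpa using (aeval_algebraMap_apply_eq_algebraMap_eval (A := ℂ) (1 : ℤ) A).symm
  · intro x hx
    rw [aeval_eq_zero_of_qInt_dvd (by simpa using hA) (stdAddChar_pow_eq_one x), zero_mul]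
    rw [← AddChar.map_zero_eq_one (ZMod.stdAddChar (N := n))]
    exact ZMod.injective_stdAddChar.ne hx

end ClassMoment

noncomputable def gaussCombination (a : ℕ → ℤ[X]) (n m : ℕ) : ℤ[X] :=
  ∑ d ∈ n.divisors, C (ArithmeticFunction.moebius d) * (a (n * m / d)).comp (X ^ d)

lemma eval_one_gaussCombination (a : ℕ → ℤ[X]) (n m : ℕ) :
    (gaussCombination a n m).eval 1 =
      ∑ d ∈ n.divisors, ArithmeticFunction.moebius (n / d) * (a (m * d)).eval 1 := by
  rw [gaussCombination, eval_finsetSum, ← Nat.sum_div_divisors]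
  refine sum_congr rfl fun d hd ↦ ?_
  obtain ⟨c, rfl⟩ := Nat.dvd_of_mem_divisors hd
  have hn := (Nat.mem_divisors.mp hd).2
  have hd0 : 0 < d := Nat.pos_of_ne_zero (left_ne_zero_of_mul hn)
  have hc0 : 0 < c := Nat.pos_of_ne_zero (right_ne_zero_of_mul hn)
  rw [Nat.mul_div_cancel_left c hd0, mul_right_comm, Nat.mul_div_cancel _ hc0, mul_comm d m]
  simp

lemma aeval_eulerOp_pow_gaussCombination (a : ℕ → ℤ[X]) (n m j : ℕ) (ω : ℂ) :
    aeval ω ((eulerOp ℤ ^ j) (gaussCombination a n m)) =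
      ∑ d ∈ n.divisors, (ArithmeticFunction.moebius d * (d : ℤ) ^ j) •
        aeval (ω ^ d) ((eulerOp ℤ ^ j) (a (n * m / d))) := by
  simp only [gaussCombination, map_sum, ← smul_eq_C_mul, map_smul, eulerOp_pow_comp_X_pow,
    aeval_comp, aeval_X_pow, smul_smul]

lemma qGaussWrt.qInt_dvd_gaussCombination {S : Set ℕ} {a : ℕ → ℤ[X]} (ha : qGaussWrt S a)
    {n m : ℕ} (hn : NatS S n) (hm : 0 < m) : qInt n ∣ gaussCombination a n m :=
  ha n m hn hm

namespace qGaussOrderWrt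

variable {S : Set ℕ} {r : ℕ} {a : ℕ → ℤ[X]}

lemma aeval_eulerOp_pow_eq (ha : qGaussOrderWrt S r a) {d N : ℕ} (hd : NatS S d) (hdN : d ∣ N)
    (hN : 0 < N) {ξ₁ ξ₂ : ℂ} (h₁ : ξ₁ ^ d = 1) (h₂ : ξ₂ ^ d = 1) (h : orderOf ξ₁ = orderOf ξ₂)
    {j : ℕ} (hj : 1 ≤ j) (hjr : j ≤ r - 1) :
    aeval ξ₁ ((eulerOp ℤ ^ j) (a N)) = aeval ξ₂ ((eulerOp ℤ ^ j) (a N)) := by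
  obtain ⟨k, rfl⟩ := hdN
  exact aeval_eulerOp_pow_eq_of_aeval_iterate_derivative_eq _ hj fun i hi ↦
    ha.2 k d (Nat.pos_of_mul_pos_left hN) hd i hi.1 (hi.2.trans hjr) ξ₁ ξ₂ h₁ h₂ h

lemma aeval_eulerOp_pow_gaussCombination_eq (ha : qGaussOrderWrt S r a) {n m : ℕ}
    (hn : NatS S n) (hm : 0 < m) {j : ℕ} (hjr : j ≤ r - 1) {ω₁ ω₂ : ℂ} (h₁ : ω₁ ^ n = 1)
    (h₂ : ω₂ ^ n = 1) (h : orderOf ω₁ = orderOf ω₂) :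
    aeval ω₁ ((eulerOp ℤ ^ j) (gaussCombination a n m)) =
      aeval ω₂ ((eulerOp ℤ ^ j) (gaussCombination a n m)) := by
  rcases Nat.eq_zero_or_pos j with rfl | hj
  · have hq := ha.1.qInt_dvd_gaussCombination hn hm
    have hω : ω₁ = 1 ↔ ω₂ = 1 := by rw [← orderOf_eq_one_iff, h, orderOf_eq_one_iff]
    by_cases hω₁ : ω₁ = 1
    · rw [hω₁, hω.mp hω₁]
    · rw [pow_zero, Module.End.one_apply, aeval_eq_zero_of_qInt_dvd hq h₁ hω₁,
        aeval_eq_zero_of_qInt_dvd hq h₂ (hω.not.mp hω₁)]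
  · rw [aeval_eulerOp_pow_gaussCombination, aeval_eulerOp_pow_gaussCombination]
    refine sum_congr rfl fun d hd ↦ congrArg _ ?_
    obtain ⟨c, hc⟩ := Nat.dvd_of_mem_divisors hd
    have hd0 : 0 < d := Nat.pos_of_mem_divisors hd
    have hc0 : 0 < c := Nat.pos_of_mul_pos_left (hc ▸ hn.1)
    have hN : n * m / d = c * m := by rw [hc, mul_assoc, Nat.mul_div_cancel_left _ hd0]
    have hroot : ∀ ω : ℂ, ω ^ n = 1 → (ω ^ d) ^ c = 1 := fun ω hω ↦ by rwa [← pow_mul, ← hc]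
    refine ha.aeval_eulerOp_pow_eq
      ⟨hc0, fun p hp hpc ↦ hn.2 p hp (hc ▸ dvd_mul_of_dvd_right hpc d)⟩ ⟨m, hN⟩
      (hN ▸ Nat.mul_pos hc0 hm) (hroot ω₁ h₁) (hroot ω₂ h₂) ?_ hj hjr
    rw [orderOf_pow' _ hd0.ne', orderOf_pow' _ hd0.ne', h]

end qGaussOrderWrt

theorem stmt5_general (S : Set ℕ) (r : ℕ)
    (a : ℕ → Polynomial ℤ) (ha : qGaussOrderWrt S r a)
    (n m : ℕ) (hn2 : 2 ≤ n) (hnS : NatS S n) (hm : 1 ≤ m) :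
    (n : ℤ) ^ (1 + min (n.minFac - 2) (r - 1)) ∣
      ∑ d ∈ n.divisors, ArithmeticFunction.moebius (n / d) * (a (m * d)).eval 1 := by
  have : NeZero n := ⟨by omega⟩
  have hs : min (n.minFac - 2) (r - 1) + 1 < n.minFac := by
    have := (Nat.minFac_prime (by omega : n ≠ 1)).two_le
    omega
  have hdvd := pow_dvd_classMoment_one (gaussCombination a n m) hs fun j hj _ _ h₁ h₂ h ↦
    ha.aeval_eulerOp_pow_gaussCombination_eq hnS hm (hj.trans (min_le_right _ _)) h₁ h₂ h
  rw [← eval_one_gaussCombination,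
    eval_one_eq_natCast_mul_classMoment (ha.1.qInt_dvd_gaussCombination hnS hm) 1, pow_add, pow_one]
  exact mul_dvd_mul_left _ hdvd

theorem stmt5 (S : Set ℕ) (hS : ∀ p ∈ S, Nat.Prime p) (r : ℕ) (hr : 1 ≤ r)
    (a : ℕ → Polynomial ℤ) (ha : qGaussOrderWrt S r a)
    (n m : ℕ) (hn2 : 2 ≤ n) (hnS : NatS S n) (hm : 1 ≤ m) :
    (n : ℤ) ^ (1 + min (n.minFac - 2) (r - 1)) ∣
      ∑ d ∈ n.divisors, ArithmeticFunction.moebius (n / d) * (a (m * d)).eval 1 :=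
  stmt5_general S r a ha n m hn2 hnS hm
end

section
/- Fix an integer b ≥ −1. The sequence d_n(q) = ∑_{i=0}^{⌊n/2⌋} q^{i(i+b)} [n choose i]_q [n−i choose i]_q satisfies the q-Gauss congruences. -/
/-!
Over `ℚ`, `[n]_q = ∏_{1 < m ∣ n} Φ_m(q)` with pairwise coprime monic factors, so it suffices that
the Möbius sum vanishes at every primitive `m`-th root of unity `ζ` with `1 < m ∣ n`.
By the `q`-binomial theorem, `∏_{j < m r} (1 - ζ^j X) = (1 - X^m)^r`, which gives the `q`-Lucas
property: `[m r choose k]_ζ` is `binom(r, k/m)` if `m ∣ k` and `0` otherwise. Hence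
`d_{m r}(ζ) = T_r`, the central trinomial coefficient. As `ζ^d` is a primitive root of order
`m / gcd(m, d)`, the Möbius sum at `ζ` is `∑_{d ∣ n} μ(d) T_{n / lcm(m, d)}`, whose terms cancel
in pairs `e`, `p e` for a prime `p ∣ m` not dividing `e`.
-/

open Polynomial Finset

/-- The Gaussian binomial coefficient `[n choose k]_q ∈ ℤ[q]`, defined via the `q`-Pascal
recurrence `[n+1 choose k+1]_q = [n choose k]_q + q^{k+1} [n choose k+1]_q`; it equals
`[n]_q! / ([k]_q! [n-k]_q!)`. -/
noncomputable def qBinom : ℕ → ℕ → Polynomial ℤ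
  | _, 0 => 1
  | 0, _ + 1 => 0
  | n + 1, k + 1 => qBinom n k + X ^ (k + 1) * qBinom n (k + 1)

theorem qBinom_zero_right (n : ℕ) : qBinom n 0 = 1 := by cases n <;> rfl

section CommRing

variable {R : Type*} [CommRing R]

/-- The `q`-binomial theorem `∏_{j<N} (1 - a q^j X) = ∑_k (-a)^k q^{k(k-1)/2} [N choose k]_q X^k`,
evaluated at `q = ω`. -/
theorem coeff_prod_range_one_sub_C_mul_X (ω : R) (N : ℕ) :
    ∀ (a : R) (k : ℕ), (∏ j ∈ range N, (1 - C (a * ω ^ j) * X)).coeff k =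
      a ^ k * (∏ j ∈ range k, -ω ^ j) * aeval ω (qBinom N k) := by
  induction N with
  | zero =>
    rintro a (_ | k)
    · simp [qBinom_zero_right]
    · simp [qBinom, coeff_one]
  | succ N ih =>
    intro a k
    have hprod : ∏ j ∈ range (N + 1), (1 - C (a * ω ^ j) * X) =
        (1 - C a * X) * ∏ j ∈ range N, (1 - C (a * ω * ω ^ j) * X) := by
      rw [prod_range_succ', pow_zero, mul_one, mul_comm]
      congr 1
      exact prod_congr rfl fun j _ => by rw [pow_succ', mul_assoc]
    rw [hprod, sub_mul, one_mul, mul_assoc, coeff_sub, coeff_C_mul]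
    rcases k with _ | k
    · rw [coeff_X_mul_zero, ih]
      simp [qBinom_zero_right]
    · rw [coeff_X_mul, ih, ih, qBinom, prod_range_succ, map_add, map_mul, aeval_X_pow]
      ring

theorem coeff_one_sub_X_pow : ∀ (r t : ℕ), ((1 - X : R[X]) ^ r).coeff t = (-1) ^ t * r.choose t
  | 0, t => by rcases t with _ | t <;> simp [coeff_one]
  | r + 1, 0 => by simp [pow_succ', sub_mul, coeff_one_sub_X_pow r 0]
  | r + 1, t + 1 => by
    rw [pow_succ', sub_mul, one_mul, coeff_sub, coeff_X_mul, coeff_one_sub_X_pow r,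
      coeff_one_sub_X_pow r, Nat.choose_succ_succ', Nat.cast_add, pow_succ]
    ring

theorem coeff_one_sub_X_pow_pow {m : ℕ} (hm : 0 < m) (r k : ℕ) :
    ((1 - X ^ m : R[X]) ^ r).coeff k =
      if m ∣ k then (-1 : R) ^ (k / m) * r.choose (k / m) else 0 := by
  rw [show (1 - X ^ m : R[X]) ^ r = expand R m ((1 - X) ^ r) by simp, coeff_expand hm,
    coeff_one_sub_X_pow]

end CommRing

theorem Finset.prod_range_mul_eq_pow_of_periodic {M : Type*} [CommMonoid M] {f : ℕ → M} {m : ℕ}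
    (hf : Function.Periodic f m) (r : ℕ) :
    ∏ j ∈ range (m * r), f j = (∏ j ∈ range m, f j) ^ r := by
  induction r with
  | zero => simp
  | succ r ih =>
    rw [Nat.mul_succ, prod_range_add, ih, pow_succ]
    congr 1
    exact prod_congr rfl fun j _ => by simpa [add_comm, mul_comm] using hf.nat_mul r j

theorem sum_range_mul_div_two_succ {M : Type*} [AddCommMonoid M] {m : ℕ} (hm : 0 < m) (r : ℕ)
    {g : ℕ → M} (hg : ∀ i, ¬ m ∣ i → g i = 0) :
    ∑ i ∈ range (m * r / 2 + 1), g i = ∑ t ∈ range (r / 2 + 1), g (m * t) := by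
  have hmem : ∀ t, m * t ∈ range (m * r / 2 + 1) ↔ t ∈ range (r / 2 + 1) := fun t => by
    simp only [mem_range, Nat.lt_succ_iff, Nat.le_div_iff_mul_le two_pos, mul_assoc,
      Nat.mul_le_mul_left_iff hm]
  rw [← sum_image fun a _ b _ hab => Nat.eq_of_mul_eq_mul_left hm hab]
  refine (sum_subset (fun i hi => ?_) fun i hi hi' => hg i ?_).symm
  · obtain ⟨t, ht, rfl⟩ := mem_image.mp hi
    exact (hmem t).mpr ht
  · rintro ⟨t, rfl⟩
    exact hi' (mem_image_of_mem _ ((hmem t).mp hi))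

theorem Int.natCast_dvd_toNat {m : ℕ} {z : ℤ} (h : (m : ℤ) ∣ z) : m ∣ z.toNat := by
  rcases le_total 0 z with hz | hz
  · exact Int.natCast_dvd_natCast.mp (by rwa [Int.toNat_of_nonneg hz])
  · rw [Int.toNat_eq_zero.mpr hz]
    exact dvd_zero m

theorem Nat.div_eq_div_gcd_mul_div_lcm {m d n : ℕ} (hm : 0 < m) (hd : 0 < d)
    (hn : Nat.lcm m d ∣ n) : n / d = m / Nat.gcd m d * (n / Nat.lcm m d) := by
  have hlcm : Nat.lcm m d = m / Nat.gcd m d * d := by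
    rw [Nat.lcm, Nat.div_mul_right_comm (Nat.gcd_dvd_left m d)]
  obtain ⟨k, rfl⟩ := hn
  rw [Nat.mul_div_cancel_left k (Nat.lcm_pos hm hd), hlcm, mul_right_comm,
    Nat.mul_div_cancel _ hd]

/-- The paper's `d_n(q)`. -/
noncomputable def qCentralTrinomial (b : ℤ) (n : ℕ) : ℤ[X] :=
  ∑ i ∈ range (n / 2 + 1), X ^ ((i : ℤ) * ((i : ℤ) + b)).toNat * qBinom n i * qBinom (n - i) i

def centralTrinomial (r : ℕ) : ℕ := ∑ t ∈ range (r / 2 + 1), r.choose t * (r - t).choose t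

namespace IsPrimitiveRoot

variable {R : Type*} [CommRing R] [IsDomain R] {ω : R} {m : ℕ}

theorem prod_range_sub_pow_mul (h : IsPrimitiveRoot ω m) (hm : 0 < m) (x y : R) :
    ∏ j ∈ range m, (x - ω ^ j * y) = x ^ m - y ^ m := by
  rw [h.pow_sub_pow_eq_prod_sub_mul x y hm]
  refine prod_nbij (ω ^ ·) (fun j hj => ?_) h.injOn_pow (fun ξ hξ => ?_) fun _ _ => rfl
  · rw [Polynomial.mem_nthRootsFinset hm, ← pow_mul, mul_comm, pow_mul, h.pow_eq_one, one_pow]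
  · have : NeZero m := ⟨hm.ne'⟩
    obtain ⟨j, hj, rfl⟩ := h.eq_pow_of_pow_eq_one ((Polynomial.mem_nthRootsFinset hm 1).mp hξ)
    exact ⟨j, by simpa using hj, rfl⟩

theorem prod_range_neg_pow (h : IsPrimitiveRoot ω m) (hm : 0 < m) :
    ∏ j ∈ range m, -ω ^ j = -1 := by
  simpa [zero_pow hm.ne'] using h.prod_range_sub_pow_mul hm 0 1

theorem prod_range_one_sub_C_mul_X (h : IsPrimitiveRoot ω m) (hm : 0 < m) :
    ∏ j ∈ range m, (1 - C (ω ^ j) * X) = 1 - X ^ m := by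
  simpa using (h.map_of_injective C_injective).prod_range_sub_pow_mul hm 1 X

theorem prod_range_neg_pow_mul_aeval_qBinom (h : IsPrimitiveRoot ω m) (hm : 0 < m) (r k : ℕ) :
    (∏ j ∈ range k, -ω ^ j) * aeval ω (qBinom (m * r) k) = ((1 - X ^ m : R[X]) ^ r).coeff k := by
  have hperiodic : Function.Periodic (fun j => 1 - C (ω ^ j) * X) m := fun j => by
    simp only [pow_add, h.pow_eq_one, mul_one]
  rw [← h.prod_range_one_sub_C_mul_X hm, ← prod_range_mul_eq_pow_of_periodic hperiodic,
    ← one_mul (∏ j ∈ range k, -ω ^ j), ← one_pow k]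
  simpa using (coeff_prod_range_one_sub_C_mul_X ω (m * r) 1 k).symm

theorem aeval_qBinom_mul_of_not_dvd (h : IsPrimitiveRoot ω m) (hm : 0 < m) (r : ℕ) {k : ℕ}
    (hk : ¬ m ∣ k) : aeval ω (qBinom (m * r) k) = 0 := by
  have hweight : ∏ j ∈ range k, -ω ^ j ≠ 0 :=
    prod_ne_zero_iff.mpr fun j _ => neg_ne_zero.mpr (pow_ne_zero j (h.ne_zero hm.ne'))
  have hcoeff := h.prod_range_neg_pow_mul_aeval_qBinom hm r k
  rw [coeff_one_sub_X_pow_pow hm, if_neg hk] at hcoeff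
  exact (mul_eq_zero.mp hcoeff).resolve_left hweight

theorem aeval_qBinom_mul_mul (h : IsPrimitiveRoot ω m) (hm : 0 < m) (r t : ℕ) :
    aeval ω (qBinom (m * r) (m * t)) = r.choose t := by
  have hperiodic : Function.Periodic (fun j => -ω ^ j) m := fun j => by
    simp only [pow_add, h.pow_eq_one, mul_one]
  have hcoeff := h.prod_range_neg_pow_mul_aeval_qBinom hm r (m * t)
  rw [coeff_one_sub_X_pow_pow hm, if_pos (dvd_mul_right m t), Nat.mul_div_cancel_left t hm,
    prod_range_mul_eq_pow_of_periodic hperiodic, h.prod_range_neg_pow hm] at hcoeff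
  exact mul_left_cancel₀ (pow_ne_zero t (neg_ne_zero.mpr one_ne_zero)) hcoeff

theorem aeval_qCentralTrinomial_mul (h : IsPrimitiveRoot ω m) (hm : 0 < m) (b : ℤ) (r : ℕ) :
    aeval ω (qCentralTrinomial b (m * r)) = centralTrinomial r := by
  rw [qCentralTrinomial, map_sum, sum_range_mul_div_two_succ hm r, centralTrinomial, Nat.cast_sum]
  · refine sum_congr rfl fun t _ => ?_
    have hexp : ω ^ (((m * t : ℕ) : ℤ) * ((m * t : ℕ) + b)).toNat = 1 :=
      (h.pow_eq_one_iff_dvd _).mpr <| Int.natCast_dvd_toNat <|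
        dvd_mul_of_dvd_left (Int.natCast_dvd_natCast.mpr (dvd_mul_right m t)) _
    rw [map_mul, map_mul, aeval_X_pow, hexp, one_mul, h.aeval_qBinom_mul_mul hm, ← Nat.mul_sub,
      h.aeval_qBinom_mul_mul hm, Nat.cast_mul]
  · intro i hi
    rw [map_mul, map_mul, h.aeval_qBinom_mul_of_not_dvd hm r hi, mul_zero, zero_mul]

theorem aeval_qCentralTrinomial_div_comp_X_pow (h : IsPrimitiveRoot ω m) (hm : 0 < m) (b : ℤ)
    {n d : ℕ} (hd : 0 < d) (hn : Nat.lcm m d ∣ n) :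
    aeval ω ((qCentralTrinomial b (n / d)).comp (X ^ d)) = centralTrinomial (n / Nat.lcm m d) := by
  have hωd : IsPrimitiveRoot (ω ^ d) (m / Nat.gcd m d) := by
    simpa [orderOf_pow' ω hd.ne', ← h.eq_orderOf] using IsPrimitiveRoot.orderOf (ω ^ d)
  rw [aeval_comp, aeval_X_pow, Nat.div_eq_div_gcd_mul_div_lcm hm hd hn,
    hωd.aeval_qCentralTrinomial_mul
      (Nat.div_pos (Nat.gcd_le_left d hm) (Nat.gcd_pos_of_pos_left d hm))]

end IsPrimitiveRoot

open ArithmeticFunction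
open scoped ArithmeticFunction.Moebius

namespace ArithmeticFunction

theorem moebius_prime_mul {p e : ℕ} (hp : p.Prime) (hpe : ¬ p ∣ e) : μ (p * e) = -μ e := by
  rw [isMultiplicative_moebius.map_mul_of_coprime ((Nat.Prime.coprime_iff_not_dvd hp).mpr hpe),
    moebius_apply_prime hp, neg_one_mul]

theorem moebius_prime_mul_of_dvd {p e : ℕ} (hp : p.Prime) (hpe : p ∣ e) : μ (p * e) = 0 :=
  moebius_eq_zero_of_not_squarefree fun hsq => hp.not_isUnit (hsq p (mul_dvd_mul_left p hpe))

theorem sum_divisors_moebius_mul_eq_zero {R : Type*} [Ring R] {n p : ℕ} (hp : p.Prime)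
    (hpn : p ∣ n) (F : ℕ → R) (hF : ∀ e, ¬ p ∣ e → F (p * e) = F e) :
    ∑ d ∈ n.divisors, (μ d : R) * F d = 0 := by
  obtain ⟨n₁, rfl⟩ := hpn
  have hcoprime : ∀ {d}, ¬ p ∣ d → (d ∣ p * n₁ ↔ d ∣ n₁) := fun hpd =>
    ((Nat.Prime.coprime_iff_not_dvd hp).mpr hpd).symm.dvd_mul_left
  have hprime_to_p : {d ∈ (p * n₁).divisors | ¬ p ∣ d} = {d ∈ n₁.divisors | ¬ p ∣ d} := by
    ext d
    simp +contextual [hp.ne_zero, hcoprime]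
  have hdiv_by_p : {d ∈ (p * n₁).divisors | p ∣ d} =
      n₁.divisors.map ⟨(p * ·), mul_right_injective₀ hp.ne_zero⟩ := by
    ext d
    simp only [mem_filter, Nat.mem_divisors, mem_map, Function.Embedding.coeFn_mk]
    constructor
    · rintro ⟨⟨hd, hn⟩, ⟨e, rfl⟩⟩
      exact ⟨e, ⟨Nat.dvd_of_mul_dvd_mul_left hp.pos hd, right_ne_zero_of_mul hn⟩, rfl⟩
    · rintro ⟨e, ⟨he, hn⟩, rfl⟩
      exact ⟨⟨mul_dvd_mul_left p he, mul_ne_zero hp.ne_zero hn⟩, dvd_mul_right p e⟩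
  have hsquare : ∑ e ∈ {e ∈ n₁.divisors | p ∣ e}, (μ (p * e) : R) * F (p * e) = 0 :=
    sum_eq_zero fun e he => by simp [moebius_prime_mul_of_dvd hp (mem_filter.mp he).2]
  have hpair : ∑ e ∈ {e ∈ n₁.divisors | ¬ p ∣ e}, (μ (p * e) : R) * F (p * e) =
      -∑ e ∈ {e ∈ n₁.divisors | ¬ p ∣ e}, (μ e : R) * F e := by
    rw [← sum_neg_distrib]
    refine sum_congr rfl fun e he => ?_
    rw [moebius_prime_mul hp (mem_filter.mp he).2, hF e (mem_filter.mp he).2, Int.cast_neg,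
      neg_mul]
  rw [← sum_filter_not_add_sum_filter _ (p ∣ ·), hprime_to_p, hdiv_by_p, sum_map,
    ← sum_filter_not_add_sum_filter n₁.divisors (p ∣ ·)]
  simp only [Function.Embedding.coeFn_mk]
  rw [hsquare, hpair, add_zero, add_neg_cancel]

end ArithmeticFunction

theorem qInt_dvd_of_forall_aeval_eq_zero {n : ℕ} (hn : 0 < n) {P : ℤ[X]}
    (hP : ∀ m ∈ n.divisors, m ≠ 1 → ∀ ζ : ℂ, IsPrimitiveRoot ζ m → aeval ζ P = 0) :
    qInt n ∣ P := by
  have hcyclotomic : ∀ m ∈ n.divisors.erase 1, cyclotomic m ℚ ∣ P.map (algebraMap ℤ ℚ) := by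
    intro m hm
    obtain ⟨hm1, hmn⟩ := mem_erase.mp hm
    have hm0 : 0 < m := Nat.pos_of_mem_divisors hmn
    have hζ := Complex.isPrimitiveRoot_exp m hm0.ne'
    rw [cyclotomic_eq_minpoly_rat hζ hm0]
    exact minpoly.dvd ℚ _ (by rw [aeval_map_algebraMap]; exact hP m hmn hm1 _ hζ)
  have hmonic : (∏ m ∈ n.divisors.erase 1, cyclotomic m ℤ).Monic :=
    monic_prod_of_monic _ _ fun m _ => cyclotomic.monic m ℤ
  rw [qInt, ← prod_cyclotomic_eq_geom_sum hn,
    ← map_dvd_map (algebraMap ℤ ℚ) (RingHom.injective_int _) hmonic, Polynomial.map_prod]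
  simp only [map_cyclotomic]
  exact prod_dvd_of_coprime (fun a _ b _ hab => cyclotomic.isCoprime_rat hab) hcyclotomic

theorem stmt6_general (b : ℤ) :
    qGauss (fun n => ∑ i ∈ Finset.range (n / 2 + 1),
      X ^ ((i : ℤ) * ((i : ℤ) + b)).toNat * qBinom n i * qBinom (n - i) i) := by
  show qGauss (qCentralTrinomial b)
  intro n hn
  refine qInt_dvd_of_forall_aeval_eq_zero hn fun m hm hm1 ζ hζ => ?_
  have hm0 : 0 < m := Nat.pos_of_mem_divisors hm
  have hmn : m ∣ n := Nat.dvd_of_mem_divisors hm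
  have hp : m.minFac.Prime := Nat.minFac_prime hm1
  have hterm : ∀ d ∈ n.divisors, aeval ζ (C (μ d) * (qCentralTrinomial b (n / d)).comp (X ^ d)) =
      (μ d : ℂ) * (centralTrinomial (n / Nat.lcm m d) : ℂ) := fun d hd => by
    rw [map_mul, aeval_C, algebraMap_int_eq, eq_intCast,
      hζ.aeval_qCentralTrinomial_div_comp_X_pow hm0 b (Nat.pos_of_mem_divisors hd)
        (Nat.lcm_dvd hmn (Nat.dvd_of_mem_divisors hd))]
  rw [map_sum, sum_congr rfl hterm]
  refine sum_divisors_moebius_mul_eq_zero hp ((Nat.minFac_dvd m).trans hmn) _ fun e hpe => ?_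
  rw [← ((Nat.Prime.coprime_iff_not_dvd hp).mpr hpe).lcm_eq_mul, ← Nat.lcm_assoc,
    Nat.lcm_eq_left (Nat.minFac_dvd m)]

theorem stmt6 (b : ℤ) (hb : -1 ≤ b) :
    qGauss (fun n => ∑ i ∈ Finset.range (n / 2 + 1),
      X ^ ((i : ℤ) * ((i : ℤ) + b)).toNat * qBinom n i * qBinom (n - i) i) :=
  stmt6_general b
end

section
/- The sequence e_n(q) = Tr(A(q^{n−1}) A(q^{n−2}) ⋯ A(q) A(1)), where A(x) is the 2×2 matrix with rows (1, x) and (1, 0) over ℤ[q], satisfies the q-Gauss congruences. (In particular e_n(1) = L_n, the n-th Lucas number.) -/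
/-!
Since `[n]_q = ∏_{1 < c ∣ n} Φ_c(q)` is a product of pairwise coprime irreducibles over `ℚ`, it
suffices that `∑_{d ∣ n} μ(d) e_{n/d}(ζ^d) = 0` for every primitive `c`-th root of unity `ζ` with
`1 < c ∣ n`. For a primitive `c`-th root `η`, the product `P = A(η^{c-1}) ⋯ A(1)` has determinant
`∏ (-η^i) = -1` and trace `1`: the polynomial `s ↦ Tr ∏ A(s η^i)` has degree `< c` and, by cyclic
invariance of the trace, is invariant under `s ↦ η s`, so it is constant, equal to its value
`Tr [[1,0],[1,0]]^c = 1` at `s = 0`. Hence `P² = P + 1`, and since `i ↦ η^i` is `c`-periodic,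
`e_{ck}(η) = Tr P^k = L_k`. As `ζ^d` is a primitive `c / gcd(c, d)`-th root, the `d`-th term of the
sum is `μ(d) L_{n / lcm(c, d)}`, and for a prime `p ∣ c` the terms of `d` and `p d` cancel.
The case `c = 1`, `η = 1` gives `e_n(1) = L_n`.
-/

open Polynomial Finset

/-- The matrix `A(x) = [[1, x], [1, 0]]` over `ℤ[q]`. -/
noncomputable def Amat (x : Polynomial ℤ) : Matrix (Fin 2) (Fin 2) (Polynomial ℤ) :=
  !![1, x; 1, 0]

/-- `e_n(q) = Tr(A(q^{n-1}) A(q^{n-2}) ⋯ A(q) A(1))`, a `q`-analogue of the Lucas numbers. -/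
noncomputable def eLucas (n : ℕ) : Polynomial ℤ :=
  Matrix.trace (((List.range n).map (fun i => Amat (X ^ (n - 1 - i)))).prod)

namespace Matrix

variable {R : Type*} [CommRing R] {B : Matrix (Fin 2) (Fin 2) R}

lemma sq_eq_add_one_of_trace_of_det (htr : B.trace = 1) (hdet : B.det = -1) : B ^ 2 = B + 1 := by
  rw [sq]
  rw [trace_fin_two] at htr
  rw [det_fin_two] at hdet
  ext i j
  fin_cases i <;> fin_cases j <;>
    simp only [mul_apply, Fin.sum_univ_two, add_apply, one_apply_eq, one_apply_ne, ne_eq,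
      zero_ne_one, one_ne_zero, not_false_eq_true, add_zero, Fin.isValue, Fin.zero_eta, Fin.mk_one]
  · linear_combination B 0 0 * htr - hdet
  · linear_combination B 0 1 * htr
  · linear_combination B 1 0 * htr
  · linear_combination B 1 1 * htr - hdet

lemma pow_succ_eq_fib_smul_add (hB : B ^ 2 = B + 1) (k : ℕ) :
    B ^ (k + 1) = (Nat.fib (k + 1) : R) • B + (Nat.fib k : R) • 1 := by
  induction k with
  | zero => simp
  | succ k ih =>
    rw [pow_succ, ih, add_mul, smul_mul_assoc, smul_mul_assoc, ← sq, hB, one_mul, Nat.fib_add_two,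
      Nat.cast_add]
    module

lemma trace_pow_succ_eq_fib (htr : B.trace = 1) (hdet : B.det = -1) (k : ℕ) :
    (B ^ (k + 1)).trace = Nat.fib k + Nat.fib (k + 2) := by
  rw [pow_succ_eq_fib_smul_add (sq_eq_add_one_of_trace_of_det htr hdet), trace_add, trace_smul,
    trace_smul, trace_one, htr, Nat.fib_add_two]
  simp only [Fintype.card_fin, smul_eq_mul, Nat.cast_add]
  ring

end Matrix

namespace Lucas

section CommRing

variable {R : Type*} [CommRing R]

def step (x : R) : Matrix (Fin 2) (Fin 2) R := !![1, x; 1, 0]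

def stepProd (x : ℕ → R) : ℕ → Matrix (Fin 2) (Fin 2) R
  | 0 => 1
  | m + 1 => step (x m) * stepProd x m

@[simp] lemma stepProd_zero (x : ℕ → R) : stepProd x 0 = 1 := rfl

lemma stepProd_succ (x : ℕ → R) (m : ℕ) : stepProd x (m + 1) = step (x m) * stepProd x m := rfl

lemma det_step (x : R) : (step x).det = -x := by simp [step, Matrix.det_fin_two_of]

lemma list_prod_range_map_step (x : ℕ → R) (n : ℕ) :
    ((List.range n).map (fun i => step (x (n - 1 - i)))).prod = stepProd x n := by
  induction n with
  | zero => rfl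
  | succ n ih =>
    rw [List.range_succ_eq_map, List.map_cons, List.prod_cons, List.map_map, stepProd_succ, ← ih]
    congr 2
    exact List.map_congr_left fun i _ => by simp only [Function.comp_apply]; congr 2; omega

lemma stepProd_add (x : ℕ → R) (m j : ℕ) :
    stepProd x (m + j) = stepProd (fun i => x (i + m)) j * stepProd x m := by
  induction j with
  | zero => simp
  | succ j ih => rw [← add_assoc, stepProd_succ, ih, stepProd_succ, add_comm j, mul_assoc]

lemma stepProd_mul_of_periodic {x : ℕ → R} {c : ℕ} (hx : Function.Periodic x c) (k : ℕ) :
    stepProd x (c * k) = stepProd x c ^ k := by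
  induction k with
  | zero => simp
  | succ k ih =>
    have hshift : (fun i => x (i + c * k)) = x := funext fun i => by
      rw [mul_comm]; exact hx.nat_mul k i
    rw [mul_add_one, stepProd_add, hshift, ih, pow_succ']

lemma trace_stepProd_shift {x : ℕ → R} {c : ℕ} (hx : x c = x 0) :
    (stepProd (fun i => x (i + 1)) c).trace = (stepProd x c).trace := by
  cases c with
  | zero => rfl
  | succ c =>
    rw [stepProd_succ, hx, Matrix.trace_mul_comm, add_comm, stepProd_add, stepProd_succ,
      stepProd_zero, mul_one]

lemma det_stepProd (x : ℕ → R) (m : ℕ) : (stepProd x m).det = ∏ i ∈ range m, -x i := by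
  induction m with
  | zero => simp
  | succ m ih =>
    rw [stepProd_succ, Matrix.det_mul, ih, det_step, prod_range_succ, mul_comm]

lemma map_stepProd {S : Type*} [CommRing S] (f : R →+* S) (x : ℕ → R) (m : ℕ) :
    f.mapMatrix (stepProd x m) = stepProd (fun i => f (x i)) m := by
  induction m with
  | zero => simp
  | succ m ih =>
    rw [stepProd_succ, map_mul, ih, stepProd_succ]
    congr 1
    ext i j; fin_cases i <;> fin_cases j <;> simp [step]

lemma map_trace_stepProd {S : Type*} [CommRing S] (f : R →+* S) (x : ℕ → R) (m : ℕ) :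
    f (stepProd x m).trace = (stepProd (fun i => f (x i)) m).trace := by
  rw [AddMonoidHom.map_trace f, ← RingHom.mapMatrix_apply, map_stepProd]

lemma stepProd_zero_succ (m : ℕ) : stepProd (fun _ => (0 : R)) (m + 1) = !![1, 0; 1, 0] := by
  induction m with
  | zero => ext i j; fin_cases i <;> fin_cases j <;> simp [stepProd_succ, step]
  | succ m ih =>
    rw [stepProd_succ, ih]; ext i j; fin_cases i <;> fin_cases j <;> simp [step]

lemma natDegree_stepProd_apply_le {x : ℕ → R[X]} (hx : ∀ i, (x i).natDegree ≤ 1) (m : ℕ) :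
    (stepProd x (m + 1) 0 0).natDegree ≤ m ∧ (stepProd x (m + 1) 0 1).natDegree ≤ m + 1 ∧
      (stepProd x (m + 1) 1 0).natDegree ≤ m ∧ (stepProd x (m + 1) 1 1).natDegree ≤ m := by
  induction m with
  | zero => simpa [stepProd_succ, step] using hx 0
  | succ m ih =>
    obtain ⟨h00, h01, h10, h11⟩ := ih
    rw [stepProd_succ x (m + 1)]
    simp only [step, Matrix.mul_apply, Fin.sum_univ_two, Matrix.of_apply, Matrix.cons_val',
      Matrix.cons_val_zero, Matrix.cons_val_one, Matrix.empty_val', Matrix.cons_val_fin_one,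
      one_mul, zero_mul, add_zero]
    refine ⟨natDegree_add_le_of_degree_le (by omega) ?_,
      natDegree_add_le_of_degree_le (by omega) ?_, by omega, by omega⟩
    · exact (natDegree_mul_le_of_le (hx _) h10).trans (by omega)
    · exact (natDegree_mul_le_of_le (hx _) h11).trans (by omega)

lemma natDegree_trace_stepProd_le {x : ℕ → R[X]} (hx : ∀ i, (x i).natDegree ≤ 1) (m : ℕ) :
    (stepProd x (m + 1)).trace.natDegree ≤ m := by
  obtain ⟨h00, -, -, h11⟩ := natDegree_stepProd_apply_le hx m
  rw [Matrix.trace_fin_two]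
  exact natDegree_add_le_of_degree_le h00 h11

end CommRing

section IsPrimitiveRoot

variable {K : Type*} [CommRing K] [IsDomain K] {ζ : K} {c : ℕ}

lemma trace_stepProd_of_isPrimitiveRoot (hζ : IsPrimitiveRoot ζ c) (hc : 0 < c) :
    (stepProd (ζ ^ ·) c).trace = 1 := by
  obtain ⟨m, rfl⟩ : ∃ m, c = m + 1 := ⟨c - 1, by omega⟩
  set f : K[X] := (stepProd (fun i => C (ζ ^ i) * X) (m + 1)).trace
  have hf_eval (s : K) : f.eval s = (stepProd (fun i => s * ζ ^ i) (m + 1)).trace := by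
    rw [← coe_evalRingHom, map_trace_stepProd]
    simp [mul_comm]
  have hf_comp : f.comp (C ζ * X) = f := by
    have hshift : (fun i => (C (ζ ^ i) * X).comp (C ζ * X)) = fun i => C (ζ ^ (i + 1)) * X := by
      funext i; simp [pow_succ, mul_assoc, mul_left_comm]
    rw [← coe_compRingHom_apply, map_trace_stepProd, coe_compRingHom, hshift]
    exact trace_stepProd_shift (x := fun i => C (ζ ^ i) * X) (by rw [hζ.pow_eq_one, pow_zero])
  have hf_coeff (k : ℕ) (hk : 0 < k) : f.coeff k = 0 := by
    rcases lt_or_ge k (m + 1) with hkc | hkc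
    · have h := congrArg (coeff · k) hf_comp
      simp only [comp_C_mul_X_coeff] at h
      by_contra hne
      exact hζ.pow_ne_one_of_pos_of_lt hk.ne' hkc ((mul_eq_left₀ hne).1 h)
    · exact coeff_eq_zero_of_natDegree_lt <|
        (natDegree_trace_stepProd_le (fun _ => (natDegree_C_mul_le _ _).trans natDegree_X_le)
          m).trans_lt (by omega)
  have hf_const : f = C (f.coeff 0) :=
    eq_C_of_natDegree_le_zero <| natDegree_le_iff_coeff_eq_zero.2 fun k hk => hf_coeff k hk
  have h := congrArg (eval 1) hf_const
  rw [eval_C, coeff_zero_eq_eval_zero, hf_eval, hf_eval] at h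
  simpa [stepProd_zero_succ, Matrix.trace_fin_two] using h

lemma det_stepProd_of_isPrimitiveRoot (hζ : IsPrimitiveRoot ζ c) (hc : 0 < c) :
    (stepProd (ζ ^ ·) c).det = -1 := by
  have h := congrArg (eval 0) (X_pow_sub_C_eq_prod hζ hc (one_pow c))
  simpa [det_stepProd, eval_prod, zero_pow hc.ne'] using h.symm

end IsPrimitiveRoot

end Lucas

lemma eLucas_eq_trace_stepProd (n : ℕ) : eLucas n = (Lucas.stepProd (X ^ ·) n).trace :=
  congrArg Matrix.trace (Lucas.list_prod_range_map_step _ n)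

lemma aeval_eLucas_mul {K : Type*} [CommRing K] [IsDomain K] {η : K} {c m : ℕ}
    (hη : IsPrimitiveRoot η c) (hc : 0 < c) (hm : 0 < m) :
    aeval η (eLucas (c * m)) = Nat.fib (m - 1) + Nat.fib (m + 1) := by
  obtain ⟨k, rfl⟩ : ∃ k, m = k + 1 := ⟨m - 1, by omega⟩
  have hperiodic : Function.Periodic (η ^ ·) c := fun i => by
    simp only [pow_add, hη.pow_eq_one, mul_one]
  rw [eLucas_eq_trace_stepProd, ← AlgHom.coe_toRingHom, Lucas.map_trace_stepProd]
  simp only [AlgHom.coe_toRingHom, map_pow, aeval_X]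
  rw [Lucas.stepProd_mul_of_periodic hperiodic, Matrix.trace_pow_succ_eq_fib
    (Lucas.trace_stepProd_of_isPrimitiveRoot hη hc) (Lucas.det_stepProd_of_isPrimitiveRoot hη hc)]
  rfl

theorem eval_one_eLucas (n : ℕ) (hn : 1 ≤ n) :
    (eLucas n).eval 1 = (Nat.fib (n - 1) : ℤ) + Nat.fib (n + 1) := by
  have h := aeval_eLucas_mul (K := ℤ) IsPrimitiveRoot.one one_pos hn
  rwa [one_mul, coe_aeval_eq_eval] at h

lemma aeval_pow_eLucas_div {K : Type*} [CommRing K] [IsDomain K] {ζ : K} {c n d : ℕ}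
    (hζ : IsPrimitiveRoot ζ c) (hc : 0 < c) (hn : 0 < n) (hcn : c ∣ n) (hdn : d ∣ n) :
    aeval (ζ ^ d) (eLucas (n / d)) =
      Nat.fib (n / Nat.lcm c d - 1) + Nat.fib (n / Nat.lcm c d + 1) := by
  have hd : 0 < d := Nat.pos_of_dvd_of_pos hdn hn
  have hζd : IsPrimitiveRoot (ζ ^ d) (c / Nat.gcd c d) := by
    simpa [orderOf_pow' ζ hd.ne', ← hζ.eq_orderOf] using IsPrimitiveRoot.orderOf (ζ ^ d)
  have hlcm : Nat.lcm c d = d * (c / Nat.gcd c d) := by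
    rw [Nat.lcm, mul_comm c d, Nat.mul_div_assoc _ (Nat.gcd_dvd_left c d)]
  obtain ⟨k, hk⟩ := Nat.lcm_dvd hcn hdn
  have hk_pos : 0 < k := Nat.pos_of_mul_pos_left (hk ▸ hn)
  have hnd : n / d = c / Nat.gcd c d * k := by
    rw [hk, hlcm, mul_assoc, Nat.mul_div_cancel_left _ hd]
  rw [hnd, aeval_eLucas_mul hζd (Nat.div_pos (Nat.gcd_le_left d hc) (Nat.gcd_pos_of_pos_left d hc))
    hk_pos, hk, Nat.mul_div_cancel_left _ (Nat.lcm_pos hc hd)]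

open ArithmeticFunction in
lemma sum_divisors_moebius_mul_eq_zero {R : Type*} [CommRing R] {n p : ℕ} (hp : p.Prime)
    (hpn : p ∣ n) {F : ℕ → R} (hF : ∀ d, ¬ p ∣ d → F (p * d) = F d) :
    ∑ d ∈ n.divisors, (moebius d : R) * F d = 0 := by
  have hpair (e : ℕ) (he : ¬ p ∣ e) :
      (moebius e : R) * F e + (moebius (p * e) : R) * F (p * e) = 0 := by
    rw [hF e he, isMultiplicative_moebius.map_mul_of_coprime (hp.coprime_iff_not_dvd.2 he),
      moebius_apply_prime hp]
    push_cast
    ring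
  have hsplit (d : ℕ) (hd : Squarefree d) (hpd : p ∣ d) : ¬ p ∣ d / p ∧ p * (d / p) = d := by
    refine ⟨fun h => hp.one_lt.ne' (Nat.isUnit_iff.1 (hd p ?_)), Nat.mul_div_cancel' hpd⟩
    simpa [Nat.mul_div_cancel' hpd] using Nat.mul_dvd_mul_left p h
  rw [← sum_filter_of_ne (p := Squarefree) fun d _ hd => by
    by_contra h; exact hd (by rw [moebius_eq_zero_of_not_squarefree h]; simp)]
  refine sum_involution (fun d _ => if p ∣ d then d / p else p * d)
    (fun d hd => ?_) (fun d hd _ => ?_) (fun d hd => ?_) (fun d hd => ?_) <;>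
    obtain ⟨⟨hdn, hn⟩, hsq⟩ := mem_filter.1 hd |>.imp_left Nat.mem_divisors.1 <;>
    by_cases hpd : p ∣ d <;> simp only [hpd, if_true, if_false]
  · obtain ⟨hpd', hd'⟩ := hsplit d hsq hpd
    rw [add_comm]
    simpa only [hd'] using hpair _ hpd'
  · exact hpair d hpd
  · exact fun heq => (hsplit d hsq hpd).1 (by rwa [heq])
  · exact fun heq => hpd (heq ▸ Nat.dvd_mul_right p d)
  · have hdiv := Nat.div_dvd_of_dvd hpd
    simpa [hn] using ⟨hdiv.trans hdn, hsq.squarefree_of_dvd hdiv⟩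
  · have hcop := hp.coprime_iff_not_dvd.2 hpd
    simpa [hn] using
      ⟨hcop.mul_dvd_of_dvd_of_dvd hpn hdn, (Nat.squarefree_mul hcop).2 ⟨hp.squarefree, hsq⟩⟩
  · simp [(hsplit d hsq hpd).1, (hsplit d hsq hpd).2]
  · simp [hp.pos]

lemma Nat.lcm_mul_left_of_dvd_of_coprime {c p d : ℕ} (hpc : p ∣ c) (hpd : p.Coprime d) :
    Nat.lcm c (p * d) = Nat.lcm c d := by
  rw [← hpd.lcm_eq_mul, ← Nat.lcm_assoc, Nat.lcm_eq_left hpc]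

lemma aeval_sum_moebius_eLucas {K : Type*} [CommRing K] [IsDomain K] {ζ : K} {c n : ℕ}
    (hζ : IsPrimitiveRoot ζ c) (hc : 1 < c) (hn : 0 < n) (hcn : c ∣ n) :
    aeval ζ (∑ d ∈ n.divisors,
      C (ArithmeticFunction.moebius d : ℤ) * (eLucas (n / d)).comp (X ^ d)) = 0 := by
  have hterm : ∀ d ∈ n.divisors,
      aeval ζ (C (ArithmeticFunction.moebius d : ℤ) * (eLucas (n / d)).comp (X ^ d)) =
        (ArithmeticFunction.moebius d : K) *
          (Nat.fib (n / Nat.lcm c d - 1) + Nat.fib (n / Nat.lcm c d + 1)) := fun d hd => by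
    rw [map_mul, aeval_C, aeval_comp, map_pow, aeval_X,
      aeval_pow_eLucas_div hζ (by omega) hn hcn (Nat.dvd_of_mem_divisors hd)]
    simp
  rw [map_sum, sum_congr rfl hterm]
  have hp := Nat.minFac_prime hc.ne'
  refine sum_divisors_moebius_mul_eq_zero hp ((Nat.minFac_dvd c).trans hcn) fun d hpd => ?_
  rw [Nat.lcm_mul_left_of_dvd_of_coprime (Nat.minFac_dvd c) (hp.coprime_iff_not_dvd.2 hpd)]

lemma qInt_dvd_of_aeval_eq_zero {n : ℕ} (hn : 0 < n) {f : ℤ[X]}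
    (hf : ∀ c ∈ n.divisors, 1 < c → ∀ ζ : ℂ, IsPrimitiveRoot ζ c → aeval ζ f = 0) :
    qInt n ∣ f := by
  have hprod : qInt n = ∏ c ∈ n.divisors.erase 1, cyclotomic c ℤ :=
    (prod_cyclotomic_eq_geom_sum hn ℤ).symm
  have hmonic : (qInt n).Monic := hprod ▸ monic_prod_of_monic _ _ fun c _ => cyclotomic.monic c ℤ
  rw [← map_dvd_map (algebraMap ℤ ℚ) (algebraMap ℤ ℚ).injective_int hmonic, hprod,
    Polynomial.map_prod]
  refine prod_dvd_of_coprime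
    (fun a _ b _ hab => by simpa using cyclotomic.isCoprime_rat hab) fun c hc => ?_
  obtain ⟨hc1, hcn⟩ := mem_erase.1 hc
  have hc_pos : 0 < c := Nat.pos_of_mem_divisors hcn
  have hζ := Complex.isPrimitiveRoot_exp c hc_pos.ne'
  rw [map_cyclotomic, cyclotomic_eq_minpoly_rat hζ hc_pos]
  refine minpoly.dvd ℚ _ ?_
  rw [aeval_map_algebraMap]
  exact hf c hcn (by omega) _ hζ

theorem qGauss_eLucas : qGauss eLucas := fun _ hn =>
  qInt_dvd_of_aeval_eq_zero hn fun _ hcn hc _ hζ =>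
    aeval_sum_moebius_eLucas hζ hc hn (Nat.dvd_of_mem_divisors hcn)

theorem stmt7 :
    qGauss eLucas ∧
      ∀ n : ℕ, 1 ≤ n → (eLucas n).eval 1 = (Nat.fib (n - 1) : ℤ) + Nat.fib (n + 1) :=
  ⟨qGauss_eLucas, eval_one_eLucas⟩
end

section
/- Let n ≥ 1 and let ω be a primitive complex n-th root of unity. Let A_ω(t) = B(ω^{n−1}) B(ω^{n−2}) ⋯ B(ω) B(1) ∈ Mat_2(ℤ[ω][t]), where B(x) is the 2×2 matrix with rows (1, x·1) and (t, 0), i.e. B(x) = [[1, x],[t, 0]], and let A(t) = [[1, t],[1, 0]] ∈ Mat_2(ℤ[t]). Then A_ω(t) and A(t^n) have the same characteristic polynomial; equivalently, det(A_ω(t)) = −t^n and Tr(A_ω(t)) = 1. -/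
open Polynomial Finset

/-- The matrix `B(x) = [[1, x], [t, 0]]` over `ℂ[t]`, for a scalar `x : ℂ`. -/
noncomputable def Bmat (x : ℂ) : Matrix (Fin 2) (Fin 2) (Polynomial ℂ) :=
  !![1, Polynomial.C x; Polynomial.X, 0]

/-- `A_ω(t) = B(ω^{n-1}) B(ω^{n-2}) ⋯ B(ω) B(1)`. -/
noncomputable def Aomega (n : ℕ) (ω : ℂ) : Matrix (Fin 2) (Fin 2) (Polynomial ℂ) :=
  (((List.range n).map (fun i => Bmat (ω ^ (n - 1 - i)))).prod)

/-!
Substituting `t ↦ ω t` turns `B(x)` into `D B(x)` with `D = diag(1, ω)`, while `B(x) D = B(ω x)`.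
Pushing the `D`s through `A_ω(ω t)` and using `ω^n = 1` shows that `A_ω(ω t)` is conjugate by `D`
to the cyclic rotation `B(1) B(ω^{n-1}) ⋯ B(ω)` of `A_ω(t)`. So the trace `p(t)` satisfies
`p(ω t) = p(t)`; since `deg p ≤ n - 1`, `p` is constant, and at `t = 0` every `B(x)` is
`[[1, x], [0, 0]]`, whose products have trace `1`. The determinant is `∏ (-ω^i t) = -t^n`, because
`∏ (-ω^i)` is the value of `X^n - 1 = ∏ (X - ω^i)` at `0`.
-/

open Matrix

lemma prod_map_range_eq_prod {M : Type*} [CommMonoid M] (f : ℕ → M) (n : ℕ) :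
    ((List.range n).map f).prod = ∏ i ∈ Finset.range n, f i := by
  rw [Finset.prod_eq_multiset_prod]; rfl

lemma IsPrimitiveRoot.prod_range_neg_pow_s16 {R : Type*} [CommRing R] [IsDomain R] {ζ : R} {n : ℕ}
    (hζ : IsPrimitiveRoot ζ n) (hn : 0 < n) : ∏ i ∈ Finset.range n, -ζ ^ i = -1 := by
  have := congrArg (eval 0) (X_pow_sub_C_eq_prod hζ hn (one_pow n))
  simpa [eval_prod, zero_pow hn.ne'] using this.symm

lemma IsPrimitiveRoot.eq_C_of_comp_C_mul_X_eq {R : Type*} [CommRing R] [IsDomain R] {ω : R}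
    {n : ℕ} {p : R[X]} (hω : IsPrimitiveRoot ω n) (hp : p.natDegree < n)
    (h : p.comp (C ω * X) = p) : p = C (p.coeff 0) := by
  refine eq_C_of_natDegree_eq_zero (Nat.le_zero.mp (natDegree_le_iff_coeff_eq_zero.mpr ?_))
  intro k hk
  rcases lt_or_ge k n with hkn | hkn
  · have hfix : p.coeff k * ω ^ k = p.coeff k := by rw [← comp_C_mul_X_coeff, h]
    have hne : ω ^ k ≠ 1 := hω.pow_ne_one_of_pos_of_lt hk.ne' hkn
    have : (ω ^ k - 1) * p.coeff k = 0 := by linear_combination hfix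
    exact (mul_eq_zero.mp this).resolve_left (sub_ne_zero.mpr hne)
  · exact coeff_eq_zero_of_natDegree_lt (hp.trans_le hkn)

lemma exists_prod_upper_row {R : Type*} [Semiring R] (x : R) (l : List R) :
    ∃ y, ((x :: l).map fun z => !![(1 : R), z; 0, 0]).prod = !![1, y; 0, 0] := by
  induction l generalizing x with
  | nil => exact ⟨x, by simp⟩
  | cons z l ih =>
    obtain ⟨y, hy⟩ := ih z
    refine ⟨y, ?_⟩
    rw [List.map_cons, List.prod_cons, hy]
    ext i j; fin_cases i <;> fin_cases j <;> simp [mul_apply, Fin.sum_univ_two]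

noncomputable def Dmat (c : ℂ) : Matrix (Fin 2) (Fin 2) ℂ[X] := !![1, 0; 0, C c]

lemma Bmat_mul_Dmat (c x : ℂ) : Bmat x * Dmat c = Bmat (c * x) := by
  simp [Bmat, Dmat, mul_comm]

lemma map_Bmat_comp_C_mul_X (c x : ℂ) :
    (Bmat x).map (compRingHom (C c * X)) = Dmat c * Bmat x := by
  ext i j
  fin_cases i <;> fin_cases j <;> simp [Bmat, Dmat]

lemma map_prod_Bmat_comp_C_mul_X_mul_Dmat (c : ℂ) (l : List ℂ) :
    ((l.map Bmat).prod).map (compRingHom (C c * X)) * Dmat c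
      = Dmat c * (l.map fun x => Bmat (c * x)).prod := by
  induction l with
  | nil => simp
  | cons x l ih =>
    simp only [List.map_cons, List.prod_cons, Matrix.map_mul, mul_assoc, ih,
      map_Bmat_comp_C_mul_X, ← Bmat_mul_Dmat]

lemma Dmat_mul_Dmat_inv {c : ℂ} (hc : c ≠ 0) : Dmat c * Dmat c⁻¹ = 1 := by
  simp [Dmat, ← C_mul, hc, Matrix.one_fin_two]

lemma Dmat_inv_mul_Dmat {c : ℂ} (hc : c ≠ 0) : Dmat c⁻¹ * Dmat c = 1 := by
  simpa using Dmat_mul_Dmat_inv (inv_ne_zero hc)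

lemma Aomega_eq_prod (n : ℕ) (ω : ℂ) :
    Aomega n ω = (((List.range n).map fun i => ω ^ (n - 1 - i)).map Bmat).prod := by
  rw [Aomega, List.map_map]; rfl

lemma Aomega_succ (m : ℕ) (ω : ℂ) :
    Aomega (m + 1) ω = ((List.range m).map fun i => Bmat (ω ^ (m - i))).prod * Bmat 1 := by
  simp [Aomega, List.range_succ]

lemma prod_Bmat_mul_pow_eq_Bmat_one_mul {m : ℕ} {ω : ℂ} (hω : ω ^ (m + 1) = 1) :
    ((List.range (m + 1)).map fun i => Bmat (ω * ω ^ (m + 1 - 1 - i))).prod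
      = Bmat 1 * ((List.range m).map fun i => Bmat (ω ^ (m - i))).prod := by
  rw [List.range_succ_eq_map, List.map_cons, List.prod_cons, List.map_map]
  congr 2
  · rw [← pow_succ', Nat.add_sub_cancel, Nat.sub_zero, hω]
  · refine List.map_congr_left fun i hi => ?_
    rw [List.mem_range] at hi
    simp only [Function.comp_apply, ← pow_succ']
    congr 2
    omega

lemma trace_Aomega_comp_C_mul_X {m : ℕ} {ω : ℂ} (hω : ω ^ (m + 1) = 1) :
    (trace (Aomega (m + 1) ω)).comp (C ω * X) = trace (Aomega (m + 1) ω) := by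
  set P := ((List.range m).map fun i => Bmat (ω ^ (m - i))).prod
  have hω0 : ω ≠ 0 := by rintro rfl; simp at hω
  have hconj : (Aomega (m + 1) ω).map (compRingHom (C ω * X)) * Dmat ω
      = Dmat ω * (Bmat 1 * P) := by
    rw [Aomega_eq_prod, map_prod_Bmat_comp_C_mul_X_mul_Dmat, List.map_map,
      ← prod_Bmat_mul_pow_eq_Bmat_one_mul hω]
    rfl
  calc (trace (Aomega (m + 1) ω)).comp (C ω * X)
      = trace ((Aomega (m + 1) ω).map (compRingHom (C ω * X))) :=
        AddMonoidHom.map_trace (compRingHom (C ω * X)) _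
    _ = trace ((Aomega (m + 1) ω).map (compRingHom (C ω * X)) * Dmat ω * Dmat ω⁻¹) := by
        rw [mul_assoc, Dmat_mul_Dmat_inv hω0, mul_one]
    _ = trace (Bmat 1 * P) := by
        rw [hconj, trace_mul_cycle, Dmat_inv_mul_Dmat hω0, one_mul]
    _ = trace (Aomega (m + 1) ω) := by rw [trace_mul_comm, Aomega_succ]

lemma Bmat_mul (x : ℂ) (M : Matrix (Fin 2) (Fin 2) ℂ[X]) :
    Bmat x * M = !![M 0 0 + C x * M 1 0, M 0 1 + C x * M 1 1; X * M 0 0, X * M 0 1] := by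
  ext i j; fin_cases i <;> fin_cases j <;> simp [Bmat, mul_apply, Fin.sum_univ_two]

lemma natDegree_entries_prod_Bmat_le (x : ℂ) (l : List ℂ) :
    (((x :: l).map Bmat).prod 0 0).natDegree ≤ l.length ∧
    (((x :: l).map Bmat).prod 0 1).natDegree ≤ l.length ∧
    (((x :: l).map Bmat).prod 1 0).natDegree ≤ l.length + 1 ∧
    (((x :: l).map Bmat).prod 1 1).natDegree ≤ l.length := by
  induction l generalizing x with
  | nil => simp [Bmat]
  | cons y l ih =>
    obtain ⟨h00, h01, h10, h11⟩ := ih y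
    have hX (p : ℂ[X]) : (X * p).natDegree ≤ p.natDegree + 1 :=
      natDegree_mul_le.trans (by rw [natDegree_X, add_comm])
    rw [List.map_cons, List.prod_cons, Bmat_mul, List.length_cons]
    simp only [of_apply, cons_val', cons_val_zero, cons_val_one, empty_val', cons_val_fin_one]
    refine ⟨?_, ?_, (hX _).trans (by omega), (hX _).trans (by omega)⟩
    · exact natDegree_add_le_of_degree_le (h00.trans (by omega))
        ((natDegree_C_mul_le x _).trans h10)
    · exact natDegree_add_le_of_degree_le (h01.trans (by omega))
        ((natDegree_C_mul_le x _).trans (h11.trans (by omega)))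

lemma natDegree_trace_prod_Bmat_le (x : ℂ) (l : List ℂ) :
    (trace ((x :: l).map Bmat).prod).natDegree ≤ l.length := by
  obtain ⟨h00, -, -, h11⟩ := natDegree_entries_prod_Bmat_le x l
  rw [trace_fin_two]
  exact natDegree_add_le_of_degree_le h00 h11

lemma coeff_zero_trace_prod_Bmat (x : ℂ) (l : List ℂ) :
    (trace ((x :: l).map Bmat).prod).coeff 0 = 1 := by
  have hB (z : ℂ) : constantCoeff.mapMatrix (Bmat z) = !![(1 : ℂ), z; 0, 0] := by
    ext i j; fin_cases i <;> fin_cases j <;> simp [Bmat]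
  obtain ⟨y, hy⟩ := exists_prod_upper_row x l
  rw [← constantCoeff_apply, AddMonoidHom.map_trace, ← RingHom.mapMatrix_apply, map_list_prod,
    List.map_map, Function.comp_def]
  simp only [hB, hy, trace_fin_two_of, add_zero]

lemma trace_Aomega {n : ℕ} {ω : ℂ} (hn : 1 ≤ n) (hω : IsPrimitiveRoot ω n) :
    trace (Aomega n ω) = 1 := by
  obtain ⟨m, rfl⟩ : ∃ m, n = m + 1 := ⟨n - 1, by omega⟩
  obtain ⟨x, l, hl, hA⟩ : ∃ x l, l.length = m ∧ Aomega (m + 1) ω = ((x :: l).map Bmat).prod :=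
    ⟨_, _, List.length_map .. ▸ List.length_range .., by
      rw [Aomega_eq_prod, List.range_succ_eq_map, List.map_cons, List.map_map]⟩
  have hconst := hω.eq_C_of_comp_C_mul_X_eq
    ((hA ▸ natDegree_trace_prod_Bmat_le x l).trans_lt (by omega))
    (trace_Aomega_comp_C_mul_X hω.pow_eq_one)
  rw [hconst, hA, coeff_zero_trace_prod_Bmat, C_1]

lemma det_Bmat (x : ℂ) : (Bmat x).det = C (-x) * X := by
  simp [Bmat, det_fin_two_of]

lemma det_Aomega {n : ℕ} {ω : ℂ} (hn : 1 ≤ n) (hω : IsPrimitiveRoot ω n) :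
    (Aomega n ω).det = -X ^ n := by
  rw [Aomega, ← coe_detMonoidHom, map_list_prod, List.map_map, prod_map_range_eq_prod]
  simp only [Function.comp_apply, coe_detMonoidHom, det_Bmat]
  rw [prod_mul_distrib, ← map_prod, prod_const, card_range,
    prod_range_reflect (fun i => -ω ^ i), hω.prod_range_neg_pow_s16 hn]
  simp

/-- For a primitive `n`-th root of unity `ω`, the matrices `A_ω(t)` and `A(t^n)` (where
`A(t) = [[1, t], [1, 0]]`) have the same characteristic polynomial; equivalently
`det A_ω(t) = -t^n` and `Tr A_ω(t) = 1`. -/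
theorem stmt16 (n : ℕ) (hn : 1 ≤ n) (ω : ℂ) (hω : IsPrimitiveRoot ω n) :
    (Aomega n ω).charpoly
        = (!![1, Polynomial.X ^ n; 1, 0] : Matrix (Fin 2) (Fin 2) (Polynomial ℂ)).charpoly
    ∧ (Aomega n ω).det = -Polynomial.X ^ n
    ∧ Matrix.trace (Aomega n ω) = 1 := by
  have hdet := det_Aomega hn hω
  have htr := trace_Aomega hn hω
  refine ⟨?_, hdet, htr⟩
  rw [charpoly_fin_two, charpoly_fin_two, hdet, htr, trace_fin_two_of, det_fin_two_of]
  simp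
end

section
/- Let n ≥ 1 and let ω be a primitive complex n-th root of unity. Then ∑_{i=1}^{n−1} 1/(ω^i − 1) = −(n−1)/2 and ∑_{i=1}^{n−1} 1/(ω^i − 1)² = −(n−1)(n−5)/12. -/
/-!
If `x ^ n = 1` and `x ≠ 1`, multiplying by `x - 1` telescopes `∑_{k<n} k x^k` to `n`, so
`(x - 1)⁻¹ = (1/n) ∑_{k<n} k x^k`; in the same way `∑_{k<n} k² x^k` is a quadratic polynomial in
`(x - 1)⁻¹`. Summing these over `x = ω^i`, `1 ≤ i < n`, and exchanging the order of summation,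
orthogonality (`∑_{1≤i<n} ω^{ik} = -1` for `0 < k < n`) turns the double sums into `-∑ k` and
`-∑ k²`, which are known in closed form.
-/

open Finset

section CommRing

variable {R : Type*} [CommRing R]

lemma two_mul_sum_range_natCast (n : ℕ) : 2 * ∑ k ∈ range n, (k : R) = n * (n - 1) := by
  induction n with
  | zero => simp
  | succ m ih => rw [sum_range_succ, mul_add, ih]; push_cast; ring

lemma six_mul_sum_range_natCast_sq (n : ℕ) :
    6 * ∑ k ∈ range n, (k : R) ^ 2 = n * (n - 1) * (2 * n - 1) := by
  induction n with
  | zero => simp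
  | succ m ih => rw [sum_range_succ, mul_add, ih]; push_cast; ring

lemma sub_one_mul_sum_range_natCast_mul_pow (x : R) (m : ℕ) :
    (x - 1) * ∑ k ∈ range m, (k : R) * x ^ k = (m - 1) * x ^ m - ∑ k ∈ range m, x ^ k + 1 := by
  induction m with
  | zero => simp
  | succ m ih =>
    rw [sum_range_succ, sum_range_succ (fun k => x ^ k)]
    push_cast
    linear_combination ih

lemma sub_one_mul_sum_range_natCast_sq_mul_pow (x : R) (m : ℕ) :
    (x - 1) * ∑ k ∈ range m, (k : R) ^ 2 * x ^ k =
      (m - 1) ^ 2 * x ^ m - 2 * ∑ k ∈ range m, (k : R) * x ^ k + ∑ k ∈ range m, x ^ k - 1 := by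
  induction m with
  | zero => simp
  | succ m ih =>
    rw [sum_range_succ, sum_range_succ (fun k => (k : R) * x ^ k), sum_range_succ (fun k => x ^ k)]
    push_cast
    linear_combination ih

lemma geom_sum_eq_zero_of_pow_eq_one [IsDomain R] {x : R} {n : ℕ} (hxn : x ^ n = 1)
    (hx : x ≠ 1) : ∑ i ∈ range n, x ^ i = 0 :=
  eq_zero_of_ne_zero_of_mul_left_eq_zero (sub_ne_zero_of_ne hx.symm) <| by
    rw [mul_neg_geom_sum, hxn, sub_self]

end CommRing

section Field

variable {K : Type*} [Field K] {x : K} {n : ℕ}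

lemma sum_range_natCast_mul_pow_of_pow_eq_one (hxn : x ^ n = 1) (hx : x ≠ 1) :
    ∑ k ∈ range n, (k : K) * x ^ k = n * (x - 1)⁻¹ := by
  have h := sub_one_mul_sum_range_natCast_mul_pow x n
  rw [hxn, geom_sum_eq_zero_of_pow_eq_one hxn hx] at h
  rw [eq_mul_inv_iff_mul_eq₀ (sub_ne_zero_of_ne hx)]
  linear_combination h

lemma sum_range_natCast_sq_mul_pow_of_pow_eq_one (hxn : x ^ n = 1) (hx : x ≠ 1) :
    ∑ k ∈ range n, (k : K) ^ 2 * x ^ k = n * (n - 2) * (x - 1)⁻¹ - 2 * n * (x - 1)⁻¹ ^ 2 := by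
  have h := sub_one_mul_sum_range_natCast_sq_mul_pow x n
  rw [hxn, geom_sum_eq_zero_of_pow_eq_one hxn hx,
    sum_range_natCast_mul_pow_of_pow_eq_one hxn hx] at h
  rw [← inv_mul_cancel_left₀ (sub_ne_zero_of_ne hx) (∑ k ∈ range n, (k : K) ^ 2 * x ^ k), h]
  ring

end Field

namespace IsPrimitiveRoot

lemma pow_pow_eq_one {M : Type*} [CommMonoid M] {ω : M} {n : ℕ} (hω : IsPrimitiveRoot ω n)
    (i : ℕ) : (ω ^ i) ^ n = 1 := by
  rw [pow_right_comm, hω.pow_eq_one, one_pow]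

lemma pow_ne_one_of_mem_Ico {M : Type*} [CommMonoid M] {ω : M} {n i : ℕ}
    (hω : IsPrimitiveRoot ω n) (hi : i ∈ Ico 1 n) : ω ^ i ≠ 1 :=
  hω.pow_ne_one_of_pos_of_lt (Nat.one_le_iff_ne_zero.1 (mem_Ico.1 hi).1) (mem_Ico.1 hi).2

lemma sum_Ico_sum_range_mul_pow {R : Type*} [CommRing R] [IsDomain R] {ω : R} {n : ℕ}
    (hω : IsPrimitiveRoot ω n) (f : ℕ → R) (hf : f 0 = 0) :
    ∑ i ∈ Ico 1 n, ∑ k ∈ range n, f k * (ω ^ i) ^ k = -∑ k ∈ range n, f k := by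
  obtain rfl | hn := n.eq_zero_or_pos
  · simp
  have hfull : ∑ i ∈ range n, ∑ k ∈ range n, f k * (ω ^ i) ^ k = 0 := by
    rw [sum_comm]
    refine sum_eq_zero fun k hk => ?_
    simp_rw [pow_right_comm ω _ k, ← mul_sum]
    obtain rfl | hk₀ := eq_or_ne k 0
    · rw [hf, zero_mul]
    · rw [geom_sum_eq_zero_of_pow_eq_one (hω.pow_pow_eq_one k)
        (hω.pow_ne_one_of_pos_of_lt hk₀ (mem_range.1 hk)), mul_zero]
  rw [sum_range_eq_add_Ico _ hn] at hfull
  simp only [pow_zero, one_pow, mul_one] at hfull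
  linear_combination hfull

variable {K : Type*} [Field K] [CharZero K] {ω : K} {n : ℕ}

theorem sum_Ico_inv_pow_sub_one (hω : IsPrimitiveRoot ω n) (hn : 0 < n) :
    ∑ i ∈ Ico 1 n, (ω ^ i - 1)⁻¹ = -((n : K) - 1) / 2 := by
  have h := hω.sum_Ico_sum_range_mul_pow (fun k => (k : K)) Nat.cast_zero
  rw [sum_congr rfl fun i hi => sum_range_natCast_mul_pow_of_pow_eq_one (hω.pow_pow_eq_one i)
    (hω.pow_ne_one_of_mem_Ico hi), ← mul_sum] at h
  refine mul_left_cancel₀ (Nat.cast_ne_zero.2 hn.ne' : (n : K) ≠ 0) ?_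
  linear_combination h - two_mul_sum_range_natCast (R := K) n / 2

theorem sum_Ico_inv_pow_sub_one_sq (hω : IsPrimitiveRoot ω n) (hn : 0 < n) :
    ∑ i ∈ Ico 1 n, (ω ^ i - 1)⁻¹ ^ 2 = -((n : K) - 1) * ((n : K) - 5) / 12 := by
  have h := hω.sum_Ico_sum_range_mul_pow (fun k => (k : K) ^ 2) (by simp)
  rw [sum_congr rfl fun i hi => sum_range_natCast_sq_mul_pow_of_pow_eq_one (hω.pow_pow_eq_one i)
    (hω.pow_ne_one_of_mem_Ico hi), sum_sub_distrib,
    ← mul_sum, ← mul_sum, hω.sum_Ico_inv_pow_sub_one hn] at h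
  refine mul_left_cancel₀ (Nat.cast_ne_zero.2 hn.ne' : (n : K) ≠ 0) ?_
  linear_combination -h / 2 + six_mul_sum_range_natCast_sq (R := K) n / 12

end IsPrimitiveRoot

/-- For a primitive complex `n`-th root of unity `ω`,
`∑_{i=1}^{n-1} 1/(ω^i - 1) = -(n-1)/2` and `∑_{i=1}^{n-1} 1/(ω^i - 1)² = -(n-1)(n-5)/12`. -/
theorem stmt17 (n : ℕ) (hn : 1 ≤ n) (ω : ℂ) (hω : IsPrimitiveRoot ω n) :
    (∑ i ∈ Finset.Ico 1 n, (ω ^ i - 1)⁻¹) = -((n : ℂ) - 1) / 2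
    ∧ (∑ i ∈ Finset.Ico 1 n, ((ω ^ i - 1)⁻¹) ^ 2) = -((n : ℂ) - 1) * ((n : ℂ) - 5) / 12 :=
  ⟨hω.sum_Ico_inv_pow_sub_one hn, hω.sum_Ico_inv_pow_sub_one_sq hn⟩
end

section
/- Let f ∈ ℤ[[u]] be a formal power series with constant term f(0) = 1. Then the integer sequence a_n = [u^n] f(u)^n (the coefficient of u^n in the n-th power of f) satisfies the Gauss congruences: for all positive integers n, ∑_{d|n} μ(d) a_{n/d} ≡ 0 mod n. -/
/-!
Modulo `p` we have `f ^ p ≡ f(u ^ p)`, and raising a congruence mod `p` to the `p ^ k`-th power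
lifts it to one mod `p ^ (k + 1)`. Applied to `f ^ m` and read off at `u ^ (p ^ (k + 1) m)`, this
gives `a (p ^ (k + 1) m) ≡ a (p ^ k m) mod p ^ (k + 1)`. Such congruences imply the Gauss
congruences: writing `n = p ^ (k + 1) m` with `p ∤ m`, only the divisors `e` and `p e` with `e ∣ m`
contribute to the Möbius sum, and they pair up into `μ e (a (p ^ (k + 1) m / e) - a (p ^ k m / e))`.
-/

open Finset

theorem Nat.Coprime.sum_divisors_mul_eq_sum_sum {M : Type*} [AddCommMonoid M] {m n : ℕ}
    (hmn : m.Coprime n) (g : ℕ → M) :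
    ∑ d ∈ (m * n).divisors, g d = ∑ d₁ ∈ m.divisors, ∑ d₂ ∈ n.divisors, g (d₁ * d₂) := by
  rw [Nat.divisors_mul, Finset.mul_def, Finset.sum_image hmn.mul_injOn_divisors,
    Finset.sum_product]

section GaussCongruences

open ArithmeticFunction
open scoped ArithmeticFunction.Moebius

def GaussCongruences (a : ℕ → ℤ) : Prop :=
  ∀ n : ℕ, 0 < n → (n : ℤ) ∣ ∑ d ∈ n.divisors, μ d * a (n / d)

theorem sum_divisors_prime_pow_mul_moebius_mul (a : ℕ → ℤ) {p m : ℕ} (hp : p.Prime)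
    (hpm : ¬ p ∣ m) (k : ℕ) :
    ∑ d ∈ (p ^ (k + 1) * m).divisors, μ d * a (p ^ (k + 1) * m / d) =
      ∑ e ∈ m.divisors, μ e * (a (p ^ (k + 1) * (m / e)) - a (p ^ k * (m / e))) := by
  rw [(Nat.Coprime.pow_left _ (hp.coprime_iff_not_dvd.mpr hpm)).sum_divisors_mul_eq_sum_sum,
    Nat.sum_divisors_prime_pow hp, Finset.sum_comm]
  refine sum_congr rfl fun e he => ?_
  have hem : e ∣ m := Nat.dvd_of_mem_divisors he
  have hpe : p.Coprime e := hp.coprime_iff_not_dvd.mpr fun h => hpm (h.trans hem)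
  have hμ : ∀ i, μ (p ^ i * e) = μ (p ^ i) * μ e := fun i =>
    isMultiplicative_moebius.map_mul_of_coprime (hpe.pow_left i)
  rw [Finset.sum_range_succ', Finset.sum_range_succ', Finset.sum_eq_zero fun i _ => by
    rw [hμ, moebius_apply_prime_pow hp (by omega)]; simp]
  have h₀ : p ^ (k + 1) * m / (p ^ 0 * e) = p ^ (k + 1) * (m / e) := by
    rw [pow_zero, one_mul, Nat.mul_div_assoc _ hem]
  have h₁ : p ^ (k + 1) * m / (p ^ (0 + 1) * e) = p ^ k * (m / e) := by
    rw [pow_succ', mul_assoc, zero_add, pow_one, Nat.mul_div_mul_left _ _ hp.pos,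
      Nat.mul_div_assoc _ hem]
  rw [h₀, h₁, hμ, hμ, zero_add, pow_one, pow_zero, moebius_apply_prime hp, moebius_apply_one]
  ring

theorem gaussCongruences_of_prime_pow_dvd_sub {a : ℕ → ℤ}
    (h : ∀ p k m : ℕ, p.Prime → (p : ℤ) ^ (k + 1) ∣ a (p ^ (k + 1) * m) - a (p ^ k * m)) :
    GaussCongruences a := by
  intro n hn
  rw [Int.natCast_dvd, Nat.dvd_iff_prime_pow_dvd_dvd]
  intro p j hp hpj
  rw [← Int.natCast_dvd, Nat.cast_pow]
  rcases Nat.eq_zero_or_pos j with rfl | hj₀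
  · exact pow_zero (p : ℤ) ▸ one_dvd _
  have hj : j ≤ n.factorization p := (hp.pow_dvd_iff_le_factorization hn.ne').mp hpj
  obtain ⟨k, hk⟩ := Nat.exists_eq_add_one.mpr (hj₀.trans_le hj)
  have hsplit : p ^ (k + 1) * (n / p ^ (k + 1)) = n := hk ▸ Nat.ordProj_mul_ordCompl_eq_self n p
  rw [← hsplit, sum_divisors_prime_pow_mul_moebius_mul a hp (hk ▸ Nat.not_dvd_ordCompl hp hn.ne')]
  exact (pow_dvd_pow _ (hk ▸ hj)).trans
    (dvd_sum fun e _ => dvd_mul_of_dvd_right (h p k _ hp) _)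

end GaussCongruences

namespace PowerSeries

theorem C_dvd_iff_forall_dvd_coeff {R : Type*} [CommRing R] (r : R) (f : PowerSeries R) :
    C r ∣ f ↔ ∀ n, r ∣ coeff n f := by
  constructor
  · rintro ⟨g, rfl⟩ n
    rw [coeff_C_mul]
    exact dvd_mul_right r _
  · intro h
    choose g hg using h
    exact ⟨mk g, ext fun n => by rw [coeff_C_mul, coeff_mk, hg]⟩

theorem natCast_dvd_pow_sub_expand {p : ℕ} (hp : p.Prime) (f : PowerSeries ℤ) :
    (p : PowerSeries ℤ) ∣ f ^ p - expand p hp.ne_zero f := by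
  have : Fact p.Prime := ⟨hp⟩
  have hfrob : (map (Int.castRingHom (ZMod p)) f) ^ p =
      expand p hp.ne_zero (map (Int.castRingHom (ZMod p)) f) := by
    rw [← MvPowerSeries.map_frobenius_expand (R := ZMod p) p hp.ne_zero, ZMod.frobenius_zmod]
    rfl
  rw [← (map_natCast C p : C (p : ℤ) = (p : PowerSeries ℤ)), C_dvd_iff_forall_dvd_coeff]
  intro n
  rw [← ZMod.intCast_zmod_eq_zero_iff_dvd, ← eq_intCast (Int.castRingHom (ZMod p)), ← coeff_map,
    map_sub, map_pow, map_expand, hfrob, sub_self, map_zero]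

theorem prime_pow_dvd_coeff_pow_sub {p : ℕ} (hp : p.Prime) (f : PowerSeries ℤ) (k m : ℕ) :
    (p : ℤ) ^ (k + 1) ∣
      coeff (p ^ (k + 1) * m) (f ^ (p ^ (k + 1) * m)) - coeff (p ^ k * m) (f ^ (p ^ k * m)) := by
  have hdvd : C ((p : ℤ) ^ (k + 1)) ∣
      f ^ (p ^ (k + 1) * m) - expand p hp.ne_zero (f ^ (p ^ k * m)) := by
    have h := dvd_sub_pow_of_dvd_sub (natCast_dvd_pow_sub_expand hp (f ^ m)) k
    convert h using 2
    · simp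
    · rw [← pow_mul, ← pow_mul, pow_succ]
      ring
    · rw [← map_pow, ← pow_mul, mul_comm]
  rw [← coeff_expand_mul p hp.ne_zero (f ^ (p ^ k * m)),
    show p * (p ^ k * m) = p ^ (k + 1) * m by ring, ← map_sub]
  exact (C_dvd_iff_forall_dvd_coeff _ _).mp hdvd _

end PowerSeries

theorem stmt18_general (f : PowerSeries ℤ) :
    ∀ n : ℕ, 0 < n →
      (n : ℤ) ∣ ∑ d ∈ n.divisors,
        ArithmeticFunction.moebius d * PowerSeries.coeff (n / d) (f ^ (n / d)) :=
  gaussCongruences_of_prime_pow_dvd_sub (a := fun n => PowerSeries.coeff n (f ^ n))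
    fun _ k m hp => PowerSeries.prime_pow_dvd_coeff_pow_sub hp f k m

/-- If `f ∈ ℤ[[u]]` has constant term `1`, then `a_n = [u^n] f(u)^n` satisfies the Gauss
congruences: for all `n ≥ 1`, `∑_{d ∣ n} μ(d) a_{n/d} ≡ 0 mod n`. -/
theorem stmt18 (f : PowerSeries ℤ) (hf : PowerSeries.constantCoeff f = 1) :
    ∀ n : ℕ, 0 < n →
      (n : ℤ) ∣ ∑ d ∈ n.divisors,
        ArithmeticFunction.moebius d * PowerSeries.coeff (n / d) (f ^ (n / d)) :=
  stmt18_general f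
end

section
/- Let {a_n(q)}_{n≥1} ⊆ ℤ[q] be a sequence satisfying the q-Gauss congruences. Suppose that for all n ≥ 1 and every n-th root of unity ω, ω·a_n′(ω) = ord(ω)² · a′_{n/ord(ω)}(1), and that there exist sequences (b_n), (c_n) of complex numbers such that ω²·a_n″(ω) = ord(ω)⁴ · b_{n/ord(ω)} + ord(ω)² · c_{n/ord(ω)} for all n ≥ 1 and ω ∈ μ_n. Then for every prime p ≥ 5 and every n ≥ 1, a_{np}(q) − a_n(q^{p²}) ≡ −(q^p − 1)² · ((p² − 1)/2) · (c_n + a_n′(1)) mod [p]_q³; in particular a_{np}(1) ≡ a_n(1) mod p³. -/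
open Polynomial Finset

/-!
Let `ζ` be a primitive `p`-th root of unity. Evaluating the `q`-Gauss congruence for `a_{mp}`
at `ζ` and inducting on `m` gives `a_{mp}(ζ) = a_m(1)`. Together with the hypotheses on
`ω a'(ω)` and `ω² a''(ω)` this says that the difference of the two sides of the claimed
congruence vanishes at `ζ` with its first two derivatives, so it is divisible by `(q - ζ)³`;
the product of these over all `ζ` is `Φ_p(q)³ = [p]_q³`.

For the integer congruence, divide `a_{np}(q) - a_n(q^{p²})` by `[p]_q³` in `ℤ[q]`. The
correction term `-(q^p - 1)² (p² - 1)/2 (c_n + a_n'(1))` has degree `2p < 3(p - 1)`, so it is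
the image of the remainder in `ℂ[q]`; hence the remainder vanishes at `q = 1`, where `[p]_q³`
takes the value `p³`.
-/

namespace Polynomial

section CommRing

variable {R : Type*} [CommRing R]

theorem X_mul_derivative_comp_X_pow (u : R[X]) (N : ℕ) :
    X * derivative (u.comp (X ^ N)) = C (N : R) * X ^ N * (derivative u).comp (X ^ N) := by
  rcases N.eq_zero_or_pos with rfl | hN
  · simp
  rw [derivative_comp, derivative_X_pow, ← mul_assoc, mul_left_comm, ← pow_succ',
    Nat.sub_add_cancel hN]

theorem X_sq_mul_derivative_derivative_comp_X_pow (u : R[X]) (N : ℕ) :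
    X ^ 2 * derivative (derivative (u.comp (X ^ N)))
      = C ((N : R) * (N - 1)) * X ^ N * (derivative u).comp (X ^ N)
        + C ((N : R) ^ 2) * X ^ (2 * N) * (derivative (derivative u)).comp (X ^ N) := by
  rcases N.eq_zero_or_pos with rfl | hN
  · simp
  have h := congrArg derivative (X_mul_derivative_comp_X_pow u N)
  have h' := X_mul_derivative_comp_X_pow (derivative u) N
  have hX : (X : R[X]) * X ^ (N - 1) = X ^ N := by rw [← pow_succ', Nat.sub_add_cancel hN]
  simp only [derivative_mul, derivative_X, one_mul, derivative_C, zero_mul, zero_add,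
    derivative_X_pow] at h
  rw [map_mul, map_sub, map_one, map_pow, two_mul, pow_add]
  linear_combination X * h - X_mul_derivative_comp_X_pow u N + C (N : R) * X ^ N * h'
    + C (N : R) * C (N : R) * (derivative u).comp (X ^ N) * hX

variable {N : ℕ} {z : R} (u : R[X])

theorem mul_eval_derivative_comp_X_pow_of_pow_eq_one (hz : z ^ N = 1) :
    z * (derivative (u.comp (X ^ N))).eval z = N * (derivative u).eval 1 := by
  simpa [eval_comp, hz] using congrArg (eval z) (X_mul_derivative_comp_X_pow u N)

theorem sq_mul_eval_derivative_derivative_comp_X_pow_of_pow_eq_one (hz : z ^ N = 1) :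
    z ^ 2 * (derivative (derivative (u.comp (X ^ N)))).eval z
      = N * (N - 1) * (derivative u).eval 1 + N ^ 2 * (derivative (derivative u)).eval 1 := by
  simpa [eval_comp, hz, pow_mul'] using
    congrArg (eval z) (X_sq_mul_derivative_derivative_comp_X_pow u N)

theorem map_modByMonic_eq_of_dvd_sub {S : Type*} [CommRing S] [Nontrivial S] (f : R →+* S)
    {q g : R[X]} (hq : q.Monic) {t : S[X]} (ht : t.degree < (q.map f).degree)
    (h : q.map f ∣ g.map f - t) : (g %ₘ q).map f = t := by
  rw [map_modByMonic f hq, modByMonic_eq_of_dvd_sub (hq.map f) h,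
    (modByMonic_eq_self_iff (hq.map f)).mpr ht]

theorem eval_dvd_eval_of_map_dvd_sub {S : Type*} [CommRing S] [Nontrivial S] {f : R →+* S}
    (hf : Function.Injective f) {q g : R[X]} (hq : q.Monic) {t : S[X]}
    (ht : t.degree < (q.map f).degree) (h : q.map f ∣ g.map f - t) {x : R}
    (hx : t.eval (f x) = 0) : q.eval x ∣ g.eval x := by
  have hrem : (g %ₘ q).eval x = 0 := by
    apply hf
    rw [← eval_map_apply, map_modByMonic_eq_of_dvd_sub f hq ht h, hx, map_zero]
  rw [← modByMonic_add_div g q, eval_add, hrem, zero_add, eval_mul]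
  exact dvd_mul_right _ _

end CommRing

section Field

variable {K : Type*} [Field K]

theorem prod_X_sub_C_pow_dvd {s : Finset K} {F : K[X]} {k : ℕ}
    (h : ∀ z ∈ s, (X - C z) ^ k ∣ F) : (∏ z ∈ s, (X - C z)) ^ k ∣ F := by
  rw [← Finset.prod_pow]
  exact Finset.prod_dvd_of_coprime
    (fun x _ y _ hxy => (pairwise_coprime_X_sub_C Function.injective_id hxy).pow) h

theorem X_sub_C_pow_dvd_of_isRoot_iterate_derivative [CharZero K] {F : K[X]} {z : K} {k : ℕ}
    (h : ∀ m < k, (derivative^[m] F).IsRoot z) : (X - C z) ^ k ∣ F := by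
  rcases eq_or_ne F 0 with rfl | hF
  · exact dvd_zero _
  cases k with
  | zero => simp
  | succ k =>
    refine (pow_dvd_pow _ ?_).trans (pow_rootMultiplicity_dvd F z)
    exact (lt_rootMultiplicity_iff_isRoot_iterate_derivative hF).mpr fun m hm => h m (by omega)

end Field

end Polynomial

theorem ArithmeticFunction.moebius_prime_mul_s19 {p : ℕ} (hp : p.Prime) (e : ℕ) :
    ArithmeticFunction.moebius (p * e) = if p ∣ e then 0 else -ArithmeticFunction.moebius e := by
  split_ifs with hpe
  · refine ArithmeticFunction.moebius_eq_zero_of_not_squarefree fun hsq => hp.ne_one ?_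
    exact Nat.isUnit_iff.mp (hsq p (mul_dvd_mul_left p hpe))
  · rw [ArithmeticFunction.isMultiplicative_moebius.map_mul_of_coprime
      (hp.coprime_iff_not_dvd.mpr hpe), ArithmeticFunction.moebius_apply_prime hp, neg_one_mul]

theorem Nat.sum_divisors_mul_prime {M : Type*} [AddCommMonoid M] (f : ℕ → M) {m p : ℕ}
    (hp : p.Prime) (hm : m ≠ 0) :
    ∑ d ∈ (m * p).divisors, f d
      = ∑ d ∈ m.divisors with ¬p ∣ d, f d + ∑ e ∈ m.divisors, f (p * e) := by
  have hmp : m * p ≠ 0 := mul_ne_zero hm hp.ne_zero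
  have hcoprime : {d ∈ (m * p).divisors | ¬p ∣ d} = {d ∈ m.divisors | ¬p ∣ d} := by
    ext d
    simp only [Finset.mem_filter, Nat.mem_divisors, and_congr_left_iff]
    intro hpd
    exact ⟨fun h => ⟨((hp.coprime_iff_not_dvd.mpr hpd).symm.dvd_of_dvd_mul_right h.1), hm⟩,
      fun h => ⟨h.1.mul_right p, hmp⟩⟩
  have hmultiple : {d ∈ (m * p).divisors | p ∣ d} = m.divisors.image (p * ·) := by
    ext d
    simp only [Finset.mem_filter, Nat.mem_divisors, Finset.mem_image]
    constructor
    · rintro ⟨⟨hd, -⟩, e, rfl⟩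
      exact ⟨e, ⟨Nat.dvd_of_mul_dvd_mul_left hp.pos (by rwa [mul_comm m p] at hd), hm⟩, rfl⟩
    · rintro ⟨e, ⟨he, -⟩, rfl⟩
      exact ⟨⟨by rw [mul_comm m p]; exact mul_dvd_mul_left p he, hmp⟩, dvd_mul_right p e⟩
  rw [← Finset.sum_filter_not_add_sum_filter _ (p ∣ ·), hcoprime, hmultiple,
    Finset.sum_image fun x _ y _ hxy => Nat.eq_of_mul_eq_mul_left hp.pos hxy]

section qGauss

variable {a : ℕ → ℤ[X]} {K : Type*} [Field K]

theorem qGauss.sum_moebius_aeval_eq_zero (ha : qGauss a) {N : ℕ} (hN : 0 < N) {z : K}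
    (hz : z ^ N = 1) (hz1 : z ≠ 1) :
    ∑ d ∈ N.divisors, (ArithmeticFunction.moebius d : K) * aeval (z ^ d) (a (N / d)) = 0 := by
  obtain ⟨t, ht⟩ := ha N hN
  have hq : aeval z (qInt N) = 0 := by simp [qInt, geom_sum_eq hz1, hz]
  simpa [hq, aeval_comp] using congrArg (aeval z) ht

theorem qGauss.aeval_mul_prime_of_isPrimitiveRoot (ha : qGauss a) {p : ℕ} (hp : p.Prime) {m : ℕ}
    (hm : m ≠ 0) {z : K} (hz : IsPrimitiveRoot z p) : aeval z (a (m * p)) = aeval 1 (a m) := by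
  induction m using Nat.strong_induction_on generalizing z with | _ m IH
  -- A divisor `p e` of `m p` contributes `-μ(e) a_{m/e}(1)` since `ζ^{pe} = 1`; this cancels the
  -- contribution of `e` from the divisors prime to `p` except for `e = 1`, by induction.
  have hmp : 0 < m * p := Nat.pos_of_ne_zero (mul_ne_zero hm hp.ne_zero)
  have hgauss := ha.sum_moebius_aeval_eq_zero hmp
    (by rw [pow_mul', hz.pow_eq_one, one_pow]) (hz.ne_one hp.one_lt)
  have hmultiple : ∀ e ∈ m.divisors,
      (ArithmeticFunction.moebius (p * e) : K) * aeval (z ^ (p * e)) (a (m * p / (p * e)))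
        = -if ¬p ∣ e then (ArithmeticFunction.moebius e : K) * aeval 1 (a (m / e)) else 0 := by
    intro e he
    rw [pow_mul, hz.pow_eq_one, one_pow, mul_comm m p,
      Nat.mul_div_mul_left _ _ hp.pos, ArithmeticFunction.moebius_prime_mul_s19 hp]
    split_ifs <;> simp_all
  rw [Nat.sum_divisors_mul_prime _ hp hm, Finset.sum_congr rfl hmultiple, Finset.sum_neg_distrib,
    ← Finset.sum_filter, ← sub_eq_add_neg, ← Finset.sum_sub_distrib] at hgauss
  have h1 : 1 ∈ {d ∈ m.divisors | ¬p ∣ d} := by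
    simp [hm, hp.ne_one]
  rw [Finset.sum_eq_single_of_mem 1 h1] at hgauss
  · simpa [sub_eq_zero] using hgauss
  intro d hd hd1
  simp only [Finset.mem_filter, Nat.mem_divisors] at hd
  obtain ⟨⟨⟨k, rfl⟩, -⟩, hpd⟩ := hd
  have hd0 : 0 < d := Nat.pos_of_ne_zero (left_ne_zero_of_mul hm)
  have hk : k < d * k := lt_mul_left (Nat.pos_of_ne_zero (right_ne_zero_of_mul hm)) (by omega)
  rw [mul_assoc, Nat.mul_div_cancel_left _ hd0, Nat.mul_div_cancel_left _ hd0,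
    IH k hk (right_ne_zero_of_mul hm) (hz.pow_of_coprime d (hp.coprime_iff_not_dvd.mpr hpd).symm),
    sub_self]

end qGauss

theorem X_sub_C_pow_three_dvd_sub_comp_X_pow_sq_sub {K : Type*} [Field K] [CharZero K] {p : ℕ}
    {z : K} (hz : z ^ p = 1) (hz0 : z ≠ 0) {A u : K[X]} {b c : K} (hA0 : A.eval z = u.eval 1)
    (hA1 : z * (derivative A).eval z = p ^ 2 * (derivative u).eval 1)
    (hA2 : z ^ 2 * (derivative (derivative A)).eval z = p ^ 4 * b + p ^ 2 * c)
    (hu2 : (derivative (derivative u)).eval 1 = b + c) :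
    (X - C z) ^ 3 ∣ A - u.comp (X ^ (p ^ 2))
      - (-(X ^ p - 1) ^ 2 * C (((p : K) ^ 2 - 1) / 2 * (c + (derivative u).eval 1))) := by
  set κ : K := ((p : K) ^ 2 - 1) / 2 * (c + (derivative u).eval 1) with hκ
  have hzN : z ^ p ^ 2 = 1 := by rw [sq, pow_mul, hz, one_pow]
  -- Writing the correction term through `X ^ p` lets the chain-rule identities handle it too.
  have hP : (-(X ^ p - 1) ^ 2 * C κ : K[X]) = C (-κ) * ((X - 1 : K[X]) ^ 2).comp (X ^ p) := by
    simp only [map_neg, sub_comp, pow_comp, X_comp, one_comp]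
    ring
  have hB1 := mul_eval_derivative_comp_X_pow_of_pow_eq_one u hzN
  have hB2 := sq_mul_eval_derivative_derivative_comp_X_pow_of_pow_eq_one u hzN
  have hv1 : (derivative ((X - 1 : K[X]) ^ 2)).eval 1 = 0 := by
    simp only [derivative_pow, derivative_sub, derivative_X, derivative_one]
    simp
  have hv2 : (derivative (derivative ((X - 1 : K[X]) ^ 2))).eval 1 = 2 := by
    simp only [derivative_pow, derivative_sub, derivative_X, derivative_one, derivative_mul]
    simp
  have hP1 : z * (derivative (((X - 1 : K[X]) ^ 2).comp (X ^ p))).eval z = 0 := by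
    rw [mul_eval_derivative_comp_X_pow_of_pow_eq_one _ hz, hv1, mul_zero]
  have hP2 : z ^ 2 * (derivative (derivative (((X - 1 : K[X]) ^ 2).comp (X ^ p)))).eval z
      = 2 * p ^ 2 := by
    rw [sq_mul_eval_derivative_derivative_comp_X_pow_of_pow_eq_one _ hz, hv1, hv2]
    ring
  push_cast at hB1 hB2
  rw [hP]
  refine X_sub_C_pow_dvd_of_isRoot_iterate_derivative fun m hm => ?_
  interval_cases m <;>
    simp only [Function.iterate_zero_apply, Function.iterate_succ_apply, IsRoot.def]
  · simp [eval_comp, hA0, hzN, hz]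
  · refine (mul_right_injective₀ hz0) ?_
    simp only [derivative_sub, derivative_C_mul, eval_sub, eval_mul, eval_C, mul_sub, mul_zero]
    linear_combination hA1 - hB1 + κ * hP1
  · refine (mul_right_injective₀ (pow_ne_zero 2 hz0)) ?_
    simp only [derivative_sub, derivative_C_mul, eval_sub, eval_mul, eval_C, mul_sub, mul_zero]
    linear_combination hA2 - hB2 + κ * hP2 - (p : K) ^ 4 * hu2 + 2 * (p : K) ^ 2 * hκ

theorem qIntC_eq_cyclotomic {p : ℕ} (hp : p.Prime) : qIntC p = cyclotomic p ℂ :=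
  (@cyclotomic_prime ℂ _ p ⟨hp⟩).symm

theorem pow_three_dvd_eval_one_of_qIntC_pow_three_dvd {p : ℕ} (hp : p.Prime) (hp3 : 3 < p)
    {g : ℤ[X]} {κ : ℂ}
    (h : qIntC p ^ 3 ∣ g.map (Int.castRingHom ℂ) - (-(X ^ p - 1) ^ 2 * C κ)) :
    (p : ℤ) ^ 3 ∣ g.eval 1 := by
  have hq : (qInt p ^ 3).map (Int.castRingHom ℂ) = qIntC p ^ 3 := by
    simp [qInt, qIntC, Polynomial.map_sum]
  have hdeg : (-(X ^ p - 1) ^ 2 * C κ).degree < (qIntC p ^ 3).degree := by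
    apply degree_lt_degree
    rw [qIntC_eq_cyclotomic hp, natDegree_pow, natDegree_cyclotomic, Nat.totient_prime hp]
    calc _ ≤ 2 * p := by compute_degree!
      _ < 3 * (p - 1) := by omega
  have hq1 : (qInt p ^ 3).eval 1 = (p : ℤ) ^ 3 := by simp [qInt]
  rw [← hq1]
  exact eval_dvd_eval_of_map_dvd_sub Int.cast_injective ((monic_geom_sum_X hp.ne_zero).pow 3)
    (hq ▸ hdeg) (hq ▸ h) (by simp)

/-- If `{a_n(q)}` satisfies the `q`-Gauss congruences, `ω a_n'(ω) = ord(ω)² a'_{n/ord(ω)}(1)`,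
and `ω² a_n''(ω) = ord(ω)⁴ b_{n/ord(ω)} + ord(ω)² c_{n/ord(ω)}` at all `n`-th roots of unity,
then for every prime `p ≥ 5` and `n ≥ 1`,
`a_{np}(q) - a_n(q^{p²}) ≡ -(q^p-1)² ((p²-1)/2)(c_n + a_n'(1)) mod [p]_q³`,
and in particular `a_{np}(1) ≡ a_n(1) mod p³`. -/
theorem stmt19 (a : ℕ → Polynomial ℤ) (ha : qGauss a)
    (h1 : ∀ n : ℕ, 1 ≤ n → ∀ ω : ℂ, ω ^ n = 1 →
      ω * Polynomial.aeval ω (Polynomial.derivative (a n))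
        = (orderOf ω : ℂ) ^ 2
            * Polynomial.aeval (1 : ℂ) (Polynomial.derivative (a (n / orderOf ω))))
    (b c : ℕ → ℂ)
    (h2 : ∀ n : ℕ, 1 ≤ n → ∀ ω : ℂ, ω ^ n = 1 →
      ω ^ 2 * Polynomial.aeval ω (Polynomial.derivative (Polynomial.derivative (a n)))
        = (orderOf ω : ℂ) ^ 4 * b (n / orderOf ω) + (orderOf ω : ℂ) ^ 2 * c (n / orderOf ω))
    (p : ℕ) (hp : p.Prime) (hp5 : 5 ≤ p) (n : ℕ) (hn : 1 ≤ n) :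
    (qIntC p) ^ 3 ∣
      ((a (n * p)).map (Int.castRingHom ℂ)
        - ((a n).map (Int.castRingHom ℂ)).comp (X ^ (p ^ 2))
        - (-(X ^ p - 1) ^ 2 * Polynomial.C ((((p : ℂ) ^ 2 - 1) / 2)
            * (c n + Polynomial.aeval (1 : ℂ) (Polynomial.derivative (a n))))))
    ∧ (p : ℤ) ^ 3 ∣ (a (n * p)).eval 1 - (a n).eval 1 := by
  have hcast (P : ℤ[X]) (z : ℂ) : aeval z P = (P.map (Int.castRingHom ℂ)).eval z := by
    rw [← algebraMap_int_eq, eval_map_algebraMap]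
  rw [hcast, ← derivative_map]
  set F : ℂ[X] := _ - _ - _
  have hroot : ∀ z ∈ primitiveRoots p ℂ, (X - C z) ^ 3 ∣ F := by
    intro z hz
    rw [mem_primitiveRoots hp.pos] at hz
    have hnp : 1 ≤ n * p := Nat.one_le_iff_ne_zero.mpr (mul_ne_zero (by omega) hp.ne_zero)
    have hznp : z ^ (n * p) = 1 := by rw [pow_mul', hz.pow_eq_one, one_pow]
    have h1z := h1 (n * p) hnp z hznp
    have h2z := h2 (n * p) hnp z hznp
    have h21 := h2 n hn 1 (one_pow n)
    rw [← hz.eq_orderOf, Nat.mul_div_cancel _ hp.pos] at h1z h2z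
    simp only [orderOf_one, Nat.div_one, Nat.cast_one, one_pow, one_mul] at h21
    simp only [hcast, ← derivative_map] at h1z h2z h21
    refine X_sub_C_pow_three_dvd_sub_comp_X_pow_sq_sub hz.pow_eq_one (hz.ne_zero hp.ne_zero)
      ?_ h1z h2z h21
    rw [← hcast, ← hcast]
    exact ha.aeval_mul_prime_of_isPrimitiveRoot hp (by omega) hz
  have hdvd : qIntC p ^ 3 ∣ F := by
    rw [qIntC_eq_cyclotomic hp,
      cyclotomic_eq_prod_X_sub_primitiveRoots (Complex.isPrimitiveRoot_exp p hp.ne_zero)]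
    exact prod_X_sub_C_pow_dvd hroot
  refine ⟨hdvd, ?_⟩
  simpa using pow_three_dvd_eval_one_of_qIntC_pow_three_dvd hp (by omega)
    (g := a (n * p) - (a n).comp (X ^ p ^ 2))
    (by rwa [Polynomial.map_sub, Polynomial.map_comp, Polynomial.map_pow, Polynomial.map_X])
end
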